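/- arXiv:2204.07671 — 3 statements merged into one kernel-verified Lean document; each statement's English description precedes it below -/
import Mathlib

section
/- No prism, prism+, pyramid, or pyramid+ has a Hamiltonian cycle. -/
open SimpleGraph

universe u

variable {V : Type u}

/-- A graph is 2-connected if it has at least three vertices, is connected,
and deleting any single vertex leaves a connected graph. -/
def TwoConnected (G : SimpleGraph V) : Prop :=
  3 ≤ Nat.card V ∧ G.Connected ∧ ∀ v : V, (G.induce ({v}ᶜ : Set V)).Connected

/-- A graph is Hamiltonian if it has a Hamiltonian cycle. -/
def IsHamiltonianGraph (G : SimpleGraph V) : Prop :=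
  ∃ (a : V) (p : G.Walk a a), p.IsCycle ∧ ∀ x : V, x ∈ p.support

/-- An HC-obstruction: 2-connected, non-Hamiltonian, and every proper induced
subgraph is not 2-connected or Hamiltonian. -/
def IsHCObstruction (G : SimpleGraph V) : Prop :=
  TwoConnected G ∧ ¬ IsHamiltonianGraph G ∧
    ∀ X : Set V, X ≠ Set.univ →
      ¬ TwoConnected (G.induce X) ∨ IsHamiltonianGraph (G.induce X)

/-- A theta: the union of three internally vertex-disjoint paths of length at
least two between two distinct vertices `a`, `b`, with no other edges. -/
def IsTheta (G : SimpleGraph V) : Prop :=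
  ∃ (a b : V) (P₁ P₂ P₃ : G.Walk a b),
    a ≠ b ∧
    P₁.IsPath ∧ P₂.IsPath ∧ P₃.IsPath ∧
    2 ≤ P₁.length ∧ 2 ≤ P₂.length ∧ 2 ≤ P₃.length ∧
    (∀ x, x ∈ P₁.support → x ∈ P₂.support → x = a ∨ x = b) ∧
    (∀ x, x ∈ P₁.support → x ∈ P₃.support → x = a ∨ x = b) ∧
    (∀ x, x ∈ P₂.support → x ∈ P₃.support → x = a ∨ x = b) ∧
    (∀ x : V, x ∈ P₁.support ∨ x ∈ P₂.support ∨ x ∈ P₃.support) ∧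
    (∀ e, e ∈ G.edgeSet → e ∈ P₁.edges ∨ e ∈ P₂.edges ∨ e ∈ P₃.edges)

/-- A theta⁺: a theta together with the edge joining its two endpoints. -/
def IsThetaPlus (G : SimpleGraph V) : Prop :=
  ∃ (a b : V) (P₁ P₂ P₃ : G.Walk a b),
    a ≠ b ∧ G.Adj a b ∧
    P₁.IsPath ∧ P₂.IsPath ∧ P₃.IsPath ∧
    2 ≤ P₁.length ∧ 2 ≤ P₂.length ∧ 2 ≤ P₃.length ∧
    (∀ x, x ∈ P₁.support → x ∈ P₂.support → x = a ∨ x = b) ∧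
    (∀ x, x ∈ P₁.support → x ∈ P₃.support → x = a ∨ x = b) ∧
    (∀ x, x ∈ P₂.support → x ∈ P₃.support → x = a ∨ x = b) ∧
    (∀ x : V, x ∈ P₁.support ∨ x ∈ P₂.support ∨ x ∈ P₃.support) ∧
    (∀ e, e ∈ G.edgeSet →
      e = s(a, b) ∨ e ∈ P₁.edges ∨ e ∈ P₂.edges ∨ e ∈ P₃.edges)

/-- A prism: two vertex-disjoint triangles joined by three pairwise
vertex-disjoint paths of length at least two, with no other edges. -/
def IsPrism (G : SimpleGraph V) : Prop :=
  ∃ (k₁ k₂ k₃ l₁ l₂ l₃ : V) (P₁ : G.Walk k₁ l₁) (P₂ : G.Walk k₂ l₂) (P₃ : G.Walk k₃ l₃),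
    G.Adj k₁ k₂ ∧ G.Adj k₂ k₃ ∧ G.Adj k₁ k₃ ∧
    G.Adj l₁ l₂ ∧ G.Adj l₂ l₃ ∧ G.Adj l₁ l₃ ∧
    P₁.IsPath ∧ P₂.IsPath ∧ P₃.IsPath ∧
    2 ≤ P₁.length ∧ 2 ≤ P₂.length ∧ 2 ≤ P₃.length ∧
    (∀ x, x ∈ P₁.support → x ∉ P₂.support) ∧
    (∀ x, x ∈ P₁.support → x ∉ P₃.support) ∧
    (∀ x, x ∈ P₂.support → x ∉ P₃.support) ∧
    (∀ x : V, x ∈ P₁.support ∨ x ∈ P₂.support ∨ x ∈ P₃.support) ∧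
    (∀ e, e ∈ G.edgeSet →
      e = s(k₁, k₂) ∨ e = s(k₂, k₃) ∨ e = s(k₁, k₃) ∨
      e = s(l₁, l₂) ∨ e = s(l₂, l₃) ∨ e = s(l₁, l₃) ∨
      e ∈ P₁.edges ∨ e ∈ P₂.edges ∨ e ∈ P₃.edges)

/-- A prism⁺: a prism together with, for each index in a nonempty subset of
`{1,2,3}`, the edge joining the ends `kᵢ`, `lᵢ` of the corresponding path. -/
def IsPrismPlus (G : SimpleGraph V) : Prop :=
  ∃ (k₁ k₂ k₃ l₁ l₂ l₃ : V) (P₁ : G.Walk k₁ l₁) (P₂ : G.Walk k₂ l₂) (P₃ : G.Walk k₃ l₃)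
    (b₁ b₂ b₃ : Prop),
    (b₁ ∨ b₂ ∨ b₃) ∧
    (b₁ → G.Adj k₁ l₁) ∧ (b₂ → G.Adj k₂ l₂) ∧ (b₃ → G.Adj k₃ l₃) ∧
    G.Adj k₁ k₂ ∧ G.Adj k₂ k₃ ∧ G.Adj k₁ k₃ ∧
    G.Adj l₁ l₂ ∧ G.Adj l₂ l₃ ∧ G.Adj l₁ l₃ ∧
    P₁.IsPath ∧ P₂.IsPath ∧ P₃.IsPath ∧
    2 ≤ P₁.length ∧ 2 ≤ P₂.length ∧ 2 ≤ P₃.length ∧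
    (∀ x, x ∈ P₁.support → x ∉ P₂.support) ∧
    (∀ x, x ∈ P₁.support → x ∉ P₃.support) ∧
    (∀ x, x ∈ P₂.support → x ∉ P₃.support) ∧
    (∀ x : V, x ∈ P₁.support ∨ x ∈ P₂.support ∨ x ∈ P₃.support) ∧
    (∀ e, e ∈ G.edgeSet →
      e = s(k₁, k₂) ∨ e = s(k₂, k₃) ∨ e = s(k₁, k₃) ∨
      e = s(l₁, l₂) ∨ e = s(l₂, l₃) ∨ e = s(l₁, l₃) ∨
      (b₁ ∧ e = s(k₁, l₁)) ∨ (b₂ ∧ e = s(k₂, l₂)) ∨ (b₃ ∧ e = s(k₃, l₃)) ∨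
      e ∈ P₁.edges ∨ e ∈ P₂.edges ∨ e ∈ P₃.edges)

/-- A pyramid: a triangle `{k₁,k₂,k₃}` and an apex `l`, joined by three
internally vertex-disjoint paths of length at least two, with no other edges. -/
def IsPyramid (G : SimpleGraph V) : Prop :=
  ∃ (k₁ k₂ k₃ l : V) (P₁ : G.Walk k₁ l) (P₂ : G.Walk k₂ l) (P₃ : G.Walk k₃ l),
    G.Adj k₁ k₂ ∧ G.Adj k₂ k₃ ∧ G.Adj k₁ k₃ ∧
    P₁.IsPath ∧ P₂.IsPath ∧ P₃.IsPath ∧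
    2 ≤ P₁.length ∧ 2 ≤ P₂.length ∧ 2 ≤ P₃.length ∧
    (∀ x, x ∈ P₁.support → x ∈ P₂.support → x = l) ∧
    (∀ x, x ∈ P₁.support → x ∈ P₃.support → x = l) ∧
    (∀ x, x ∈ P₂.support → x ∈ P₃.support → x = l) ∧
    (∀ x : V, x ∈ P₁.support ∨ x ∈ P₂.support ∨ x ∈ P₃.support) ∧
    (∀ e, e ∈ G.edgeSet →
      e = s(k₁, k₂) ∨ e = s(k₂, k₃) ∨ e = s(k₁, k₃) ∨
      e ∈ P₁.edges ∨ e ∈ P₂.edges ∨ e ∈ P₃.edges)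

/-- A pyramid⁺: a pyramid together with, for each index in a nonempty subset of
`{1,2,3}`, the edge joining the ends `kᵢ`, `l` of the corresponding path. -/
def IsPyramidPlus (G : SimpleGraph V) : Prop :=
  ∃ (k₁ k₂ k₃ l : V) (P₁ : G.Walk k₁ l) (P₂ : G.Walk k₂ l) (P₃ : G.Walk k₃ l)
    (b₁ b₂ b₃ : Prop),
    (b₁ ∨ b₂ ∨ b₃) ∧
    (b₁ → G.Adj k₁ l) ∧ (b₂ → G.Adj k₂ l) ∧ (b₃ → G.Adj k₃ l) ∧
    G.Adj k₁ k₂ ∧ G.Adj k₂ k₃ ∧ G.Adj k₁ k₃ ∧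
    P₁.IsPath ∧ P₂.IsPath ∧ P₃.IsPath ∧
    2 ≤ P₁.length ∧ 2 ≤ P₂.length ∧ 2 ≤ P₃.length ∧
    (∀ x, x ∈ P₁.support → x ∈ P₂.support → x = l) ∧
    (∀ x, x ∈ P₁.support → x ∈ P₃.support → x = l) ∧
    (∀ x, x ∈ P₂.support → x ∈ P₃.support → x = l) ∧
    (∀ x : V, x ∈ P₁.support ∨ x ∈ P₂.support ∨ x ∈ P₃.support) ∧
    (∀ e, e ∈ G.edgeSet →
      e = s(k₁, k₂) ∨ e = s(k₂, k₃) ∨ e = s(k₁, k₃) ∨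
      (b₁ ∧ e = s(k₁, l)) ∨ (b₂ ∧ e = s(k₂, l)) ∨ (b₃ ∧ e = s(k₃, l)) ∨
      e ∈ P₁.edges ∨ e ∈ P₂.edges ∨ e ∈ P₃.edges)

/-- A 3-path-configuration: a prism, a pyramid, a theta, a prism⁺, a
pyramid⁺, or a theta⁺. -/
def IsThreePathConfig (G : SimpleGraph V) : Prop :=
  IsPrism G ∨ IsPyramid G ∨ IsTheta G ∨ IsPrismPlus G ∨ IsPyramidPlus G ∨ IsThetaPlus G

/-- A wheel: a cycle together with one extra vertex having at least three
neighbors on the cycle, and no other edges. -/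
def IsWheel (G : SimpleGraph V) : Prop :=
  ∃ (c u : V) (w : G.Walk u u), w.IsCycle ∧ c ∉ w.support ∧
    (∀ x : V, x = c ∨ x ∈ w.support) ∧
    3 ≤ {x | x ∈ w.support ∧ G.Adj c x}.ncard ∧
    (∀ e, e ∈ G.edgeSet → e ∈ w.edges ∨ ∃ x ∈ w.support, e = s(c, x))

/-- A graph is wheel-free if no induced subgraph is a wheel. -/
def WheelFree (G : SimpleGraph V) : Prop :=
  ∀ X : Set V, ¬ IsWheel (G.induce X)

/-- A set of vertices is a cutset if deleting it leaves a disconnected graph. -/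
def IsCutset (G : SimpleGraph V) (X : Set V) : Prop :=
  ¬ (G.induce (Xᶜ : Set V)).Preconnected

section Toolbox
open SimpleGraph.Walk
variable {V : Type u} {G : SimpleGraph V}

private lemma countP_edges_le [DecidableEq V] (v : V) : ∀ {a b : V} (w : G.Walk a b),
    w.edges.countP (fun e => decide (v ∈ e)) + (if v = a then 1 else 0) + (if v = b then 1 else 0)
      ≤ 2 * w.support.count v := by
  intro a b w
  induction w with
  | nil =>
    simp only [edges_nil, List.countP_nil, support_nil, List.count_cons, List.count_nil]
    split_ifs with h1 h2 <;> simp_all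
  | @cons a u b h q ih =>
    rw [edges_cons, support_cons, List.countP_cons, List.count_cons]
    have hne : a ≠ u := h.ne
    have hmem : v ∈ s(a, u) ↔ (v = a ∨ v = u) := Sym2.mem_iff
    by_cases h1 : v ∈ s(a,u) <;> by_cases h2 : v = a <;> by_cases h3 : v = u <;>
      by_cases h4 : v = b <;> simp_all <;> omega

private lemma two_le_countP [DecidableEq V] {l : List (Sym2 V)} (hn : l.Nodup) {p : Sym2 V → Prop}
    [DecidablePred p] {e1 e2 : Sym2 V}
    (h1 : e1 ∈ l) (h2 : e2 ∈ l) (h12 : e1 ≠ e2) (hp1 : p e1) (hp2 : p e2) :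
    2 ≤ l.countP (fun e => decide (p e)) := by
  rw [List.countP_eq_length_filter]
  have hf : (l.filter (fun e => decide (p e))).Nodup := hn.filter _
  have h1' : e1 ∈ l.filter (fun e => decide (p e)) := List.mem_filter.2 ⟨h1, by simpa⟩
  have h2' : e2 ∈ l.filter (fun e => decide (p e)) := List.mem_filter.2 ⟨h2, by simpa⟩
  have : ({e1, e2} : Finset (Sym2 V)) ⊆ (l.filter (fun e => decide (p e))).toFinset := by
    intro x hx
    simp only [Finset.mem_insert, Finset.mem_singleton] at hx
    rcases hx with rfl | rfl <;> simp [List.mem_toFinset, List.mem_filter, *]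
  have := Finset.card_le_card this
  rwa [Finset.card_insert_of_notMem (by simpa), Finset.card_singleton,
    List.toFinset_card_of_nodup hf] at this

private lemma three_le_countP [DecidableEq V] {l : List (Sym2 V)} (hn : l.Nodup) {p : Sym2 V → Prop}
    [DecidablePred p] {e1 e2 e3 : Sym2 V}
    (h1 : e1 ∈ l) (h2 : e2 ∈ l) (h3 : e3 ∈ l) (h12 : e1 ≠ e2) (h13 : e1 ≠ e3) (h23 : e2 ≠ e3)
    (hp1 : p e1) (hp2 : p e2) (hp3 : p e3) :
    3 ≤ l.countP (fun e => decide (p e)) := by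
  rw [List.countP_eq_length_filter]
  have hf : (l.filter (fun e => decide (p e))).Nodup := hn.filter _
  have : ({e1, e2, e3} : Finset (Sym2 V)) ⊆ (l.filter (fun e => decide (p e))).toFinset := by
    intro x hx
    simp only [Finset.mem_insert, Finset.mem_singleton] at hx
    rcases hx with rfl | rfl | rfl <;> simp [List.mem_toFinset, List.mem_filter, *]
  have := Finset.card_le_card this
  rwa [Finset.card_insert_of_notMem (by simp [h12, h13]),
    Finset.card_insert_of_notMem (by simpa), Finset.card_singleton,
    List.toFinset_card_of_nodup hf] at this

private lemma sym2_congr_ne {v x y : V} (h : s(v,x) = s(v,y)) : x = y := by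
  rw [Sym2.eq_iff] at h
  rcases h with ⟨_, rfl⟩ | ⟨h1, h2⟩
  · rfl
  · exact h2.trans h1

private lemma sym2_ne_of_ne {v x y : V} (h : x ≠ y) : s(v,x) ≠ s(v,y) :=
  fun h' => h (sym2_congr_ne h')

/-- a path has at most two edges at any vertex -/
private lemma path_no_three [DecidableEq V] {a b v x y z : V} {P : G.Walk a b} (hP : P.IsPath)
    (hx : s(v,x) ∈ P.edges) (hy : s(v,y) ∈ P.edges) (hz : s(v,z) ∈ P.edges)
    (hxy : x ≠ y) (hxz : x ≠ z) (hyz : y ≠ z) : False := by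
  have h3 : 3 ≤ P.edges.countP (fun e => decide (v ∈ e)) :=
    three_le_countP hP.isTrail.edges_nodup hx hy hz (sym2_ne_of_ne hxy) (sym2_ne_of_ne hxz)
      (sym2_ne_of_ne hyz) (Sym2.mem_mk_left v x) (Sym2.mem_mk_left v y) (Sym2.mem_mk_left v z)
  have hcount : P.support.count v ≤ 1 := List.nodup_iff_count_le_one.mp hP.support_nodup v
  have := countP_edges_le v P
  omega

/-- a path has at most one edge at its left endpoint -/
private lemma path_endpoint_unique [DecidableEq V] {a b x y : V} {P : G.Walk a b}
    (hP : P.IsPath) (hx : s(a,x) ∈ P.edges) (hy : s(a,y) ∈ P.edges) : x = y := by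
  by_contra hne
  have h2 : 2 ≤ P.edges.countP (fun e => decide (a ∈ e)) :=
    two_le_countP hP.isTrail.edges_nodup hx hy (sym2_ne_of_ne hne)
      (Sym2.mem_mk_left a x) (Sym2.mem_mk_left a y)
  have hcount : P.support.count a ≤ 1 := List.nodup_iff_count_le_one.mp hP.support_nodup a
  have := countP_edges_le a P
  norm_num at this
  omega

/-- a path has at most one edge at its right endpoint -/
private lemma path_endpoint_unique' [DecidableEq V] {a b x y : V} {P : G.Walk a b}
    (hP : P.IsPath) (hx : s(b,x) ∈ P.edges) (hy : s(b,y) ∈ P.edges) : x = y := by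
  have hx' : s(b,x) ∈ P.reverse.edges := by rw [edges_reverse, List.mem_reverse]; exact hx
  have hy' : s(b,y) ∈ P.reverse.edges := by rw [edges_reverse, List.mem_reverse]; exact hy
  exact path_endpoint_unique hP.reverse hx' hy'

/-- a cycle has at most two edges at any vertex -/
private lemma cycle_no_three [DecidableEq V] {a v x y z : V} {c : G.Walk a a} (hc : c.IsCycle)
    (hx : s(v,x) ∈ c.edges) (hy : s(v,y) ∈ c.edges) (hz : s(v,z) ∈ c.edges)
    (hxy : x ≠ y) (hxz : x ≠ z) (hyz : y ≠ z) : False := by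
  have h3 : 3 ≤ c.edges.countP (fun e => decide (v ∈ e)) :=
    three_le_countP hc.isTrail.edges_nodup hx hy hz (sym2_ne_of_ne hxy) (sym2_ne_of_ne hxz)
      (sym2_ne_of_ne hyz) (Sym2.mem_mk_left v x) (Sym2.mem_mk_left v y) (Sym2.mem_mk_left v z)
  have hcount : c.support.tail.count v ≤ 1 := List.nodup_iff_count_le_one.mp hc.support_nodup v
  have hsup : c.support.count v ≤ 1 + (if v = a then 1 else 0) := by
    rw [support_eq_cons, List.count_cons]
    split_ifs with h1 h2 <;> simp_all [beq_iff_eq]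
  have := countP_edges_le v c
  omega

private lemma no_end_edge {a b : V} {P : G.Walk a b} (hP : P.IsPath) (h2 : 2 ≤ P.length) :
    s(a,b) ∉ P.edges := by
  intro h
  cases P with
  | nil => simp at h
  | @cons _ u _ hadj q =>
    rw [edges_cons, List.mem_cons] at h
    rw [cons_isPath_iff] at hP
    rcases h with h | h
    · rw [Sym2.eq_iff] at h
      rcases h with ⟨-, rfl⟩ | ⟨rfl, -⟩
      · have : q = nil := isPath_iff_eq_nil.mp hP.1
        subst this
        simp at h2
      · exact hadj.ne rfl
    · exact hP.2 (q.fst_mem_support_of_mem_edges h)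

/-- second vertex of a path of length ≥ 2 -/
private lemma exists_second {a b : V} {P : G.Walk a b} (hP : P.IsPath) (h2 : 2 ≤ P.length) :
    ∃ u, s(a,u) ∈ P.edges ∧ u ∈ P.support ∧ u ≠ a ∧ u ≠ b := by
  have hab : a ≠ b := by
    rintro rfl
    rw [isPath_iff_eq_nil] at hP
    subst hP; simp at h2
  obtain ⟨u, hadj, q, rfl⟩ := exists_eq_cons_of_ne hab P
  refine ⟨u, by simp, by simp, hadj.ne', ?_⟩
  rintro rfl
  exact no_end_edge hP h2 (by simp)

/-- second-to-last vertex of a path of length ≥ 2 -/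
private lemma exists_penult {a b : V} {P : G.Walk a b} (hP : P.IsPath) (h2 : 2 ≤ P.length) :
    ∃ w, s(b,w) ∈ P.edges ∧ w ∈ P.support ∧ w ≠ b ∧ w ≠ a := by
  obtain ⟨w, he, hs, h1, h3⟩ := exists_second hP.reverse (by rwa [length_reverse])
  refine ⟨w, ?_, ?_, h1, h3⟩
  · rwa [edges_reverse, List.mem_reverse] at he
  · rwa [support_reverse, List.mem_reverse] at hs

private lemma cycle_exists_edge [DecidableEq V] {a v : V} {c : G.Walk a a} (hc : c.IsCycle)
    (hv : v ∈ c.support) : ∃ x, s(v,x) ∈ c.edges := by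
  have hc' : (c.rotate v hv).IsCycle := hc.rotate hv
  have hne : (c.rotate v hv) ≠ nil := hc'.ne_nil
  cases h : (c.rotate v hv) with
  | nil => exact absurd h hne
  | @cons _ u _ hadj q =>
    refine ⟨u, ?_⟩
    have : s(v,u) ∈ (c.rotate v hv).edges := by rw [h]; simp
    exact ((c.rotate_edges v hv).perm.mem_iff).mp this

/-- at each vertex, a cycle passing through it has a second, distinct edge -/
private lemma cycle_exists_other [DecidableEq V] {a v x : V} {c : G.Walk a a} (hc : c.IsCycle)
    (hx : s(v,x) ∈ c.edges) : ∃ y, y ≠ x ∧ s(v,y) ∈ c.edges := by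
  classical
  have heven : Even (c.edges.countP (fun e => decide (v ∈ e))) := by
    have := (hc.isTrail.even_countP_edges_iff v).mpr (fun h => absurd rfl h)
    convert this using 2
  set f := c.edges.filter (fun e => decide (v ∈ e)) with hf
  have hxf : s(v,x) ∈ f := List.mem_filter.2 ⟨hx, by simp⟩
  have hlen : 2 ≤ f.length := by
    rw [List.countP_eq_length_filter] at heven
    have h1 : 1 ≤ f.length := List.length_pos_of_mem hxf
    rw [hf] at h1 ⊢
    rcases heven with ⟨k, hk⟩
    omega
  have hnd : f.Nodup := hc.isTrail.edges_nodup.filter _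
  have : ∃ e ∈ f, e ≠ s(v,x) := by
    by_contra hcon
    push_neg at hcon
    have : f.length ≤ 1 := by
      have hall : ∀ e ∈ f, e = s(v,x) := hcon
      calc f.length = f.count s(v,x) := (List.count_eq_length.mpr (fun e he => by
              simpa [beq_iff_eq] using (hall e he).symm)).symm
        _ ≤ 1 := List.nodup_iff_count_le_one.mp hnd _
    omega
  obtain ⟨e, hef, hene⟩ := this
  have hvm : v ∈ e := by
    have := List.mem_filter.1 hef
    simpa using this.2
  obtain ⟨y, rfl⟩ := (Sym2.mem_iff_exists).mp hvm
  exact ⟨y, fun h => hene (by rw [h]), (List.mem_filter.1 hef).1⟩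

/-- the two edges of a cycle at a vertex -/
private lemma cycle_two_nbrs [DecidableEq V] {a v x : V} {c : G.Walk a a} (hc : c.IsCycle)
    (hx : s(v,x) ∈ c.edges) :
    ∃ n, n ≠ x ∧ s(v,n) ∈ c.edges ∧ ∀ z, s(v,z) ∈ c.edges → z = x ∨ z = n := by
  obtain ⟨n, hnx, hn⟩ := cycle_exists_other hc hx
  refine ⟨n, hnx, hn, fun z hz => ?_⟩
  by_contra hcon
  push_neg at hcon
  exact cycle_no_three hc hx hn hz (Ne.symm hnx) (Ne.symm hcon.1) (Ne.symm hcon.2)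

private lemma walk_closed {S : Set V} : ∀ {x y : V} (w : G.Walk x y),
    (∀ u v, s(u,v) ∈ w.edges → u ∈ S → v ∈ S) → ∀ z ∈ w.support, (z ∈ S ↔ x ∈ S) := by
  intro x y w
  induction w with
  | nil => intro _ z hz; simp at hz; subst hz; rfl
  | @cons x u y hadj q ih =>
    intro hcl z hz
    have hcl' : ∀ u' v', s(u',v') ∈ q.edges → u' ∈ S → v' ∈ S := by
      intro u' v' he
      exact hcl u' v' (by rw [edges_cons]; exact List.mem_cons_of_mem _ he)
    have hxu : x ∈ S ↔ u ∈ S := by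
      constructor
      · exact hcl x u (by simp)
      · exact fun h => hcl u x (by rw [edges_cons, Sym2.eq_swap]; exact List.mem_cons_self) h
    rw [support_cons] at hz
    rcases List.mem_cons.1 hz with rfl | hz'
    · rfl
    · rw [ih hcl' z hz', hxu]

/-- If all edges of `G` at internal vertices of a path `P` are edges of `P`, then a
Hamiltonian cycle contains all edges of `P`. -/
private lemma path_edges_in_cycle [DecidableEq V] {a0 aP bP : V} {c : G.Walk a0 a0}
    (hc : c.IsCycle) (hham : ∀ x, x ∈ c.support)
    {P : G.Walk aP bP} (hP : P.IsPath) (hlen : 2 ≤ P.length)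
    (hcl : ∀ v z, v ∈ P.support → v ≠ aP → v ≠ bP → s(v,z) ∈ G.edgeSet → s(v,z) ∈ P.edges) :
    ∀ ⦃u w : V⦄, s(u,w) ∈ P.edges → s(u,w) ∈ c.edges := by
  have aux : ∀ v z, v ∈ P.support → v ≠ aP → v ≠ bP → s(v,z) ∈ P.edges → s(v,z) ∈ c.edges := by
    intro v z hv hva hvb hvz
    obtain ⟨x, hx⟩ := cycle_exists_edge hc (hham v)
    obtain ⟨y, hyx, hy, -⟩ := cycle_two_nbrs hc hx
    have hxP : s(v,x) ∈ P.edges := hcl v x hv hva hvb (c.edges_subset_edgeSet hx)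
    have hyP : s(v,y) ∈ P.edges := hcl v y hv hva hvb (c.edges_subset_edgeSet hy)
    by_cases hzx : z = x
    · subst hzx; exact hx
    by_cases hzy : z = y
    · subst hzy; exact hy
    exact absurd (path_no_three hP hxP hyP hvz (Ne.symm hyx) (Ne.symm hzx) (Ne.symm hzy)) id
  intro u w huw
  have hu : u ∈ P.support := P.fst_mem_support_of_mem_edges huw
  have hw : w ∈ P.support := P.snd_mem_support_of_mem_edges huw
  have hne : u ≠ w := (P.adj_of_mem_edges huw).ne
  by_cases hua : u ≠ aP
  · by_cases hub : u ≠ bP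
    · exact aux u w hu hua hub huw
    · push_neg at hub
      have hwb : w ≠ bP := fun h => hne (by rw [hub, h])
      have hwa : w ≠ aP := fun h =>
        no_end_edge hP hlen (by rw [hub, h] at huw; rwa [Sym2.eq_swap] at huw)
      rw [Sym2.eq_swap] at huw ⊢
      exact aux w u hw hwa hwb huw
  · push_neg at hua
    have hwa : w ≠ aP := fun h => hne (by rw [hua, h])
    have hwb : w ≠ bP := fun h =>
      no_end_edge hP hlen (by rwa [hua, h] at huw)
    rw [Sym2.eq_swap] at huw ⊢
    exact aux w u hw hwa hwb huw

/-- final contradiction: a set closed under the edges of a Hamiltonian cycle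
containing one vertex and missing another. -/
private lemma closed_set_contra {a p q : V} {c : G.Walk a a} (hham : ∀ x, x ∈ c.support)
    {S : Set V} (hp : p ∈ S) (hq : q ∉ S)
    (hclosed : ∀ u v, s(u,v) ∈ c.edges → u ∈ S → v ∈ S) : False := by
  have h1 := walk_closed c hclosed p (hham p)
  have h2 := walk_closed c hclosed q (hham q)
  rw [h1] at hp
  rw [h2] at hq
  exact hq hp

private lemma pyramid_core [DecidableEq V] {k₁ k₂ k₃ l : V}
    {P₁ : G.Walk k₁ l} {P₂ : G.Walk k₂ l} {P₃ : G.Walk k₃ l}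
    (hP₁ : P₁.IsPath) (hP₂ : P₂.IsPath) (hP₃ : P₃.IsPath)
    (hl₁ : 2 ≤ P₁.length) (hl₂ : 2 ≤ P₂.length) (hl₃ : 2 ≤ P₃.length)
    (h12 : ∀ x, x ∈ P₁.support → x ∈ P₂.support → x = l)
    (h13 : ∀ x, x ∈ P₁.support → x ∈ P₃.support → x = l)
    (h23 : ∀ x, x ∈ P₂.support → x ∈ P₃.support → x = l)
    (hE : ∀ e ∈ G.edgeSet, e = s(k₁,k₂) ∨ e = s(k₂,k₃) ∨ e = s(k₁,k₃) ∨
      e = s(k₁,l) ∨ e = s(k₂,l) ∨ e = s(k₃,l) ∨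
      e ∈ P₁.edges ∨ e ∈ P₂.edges ∨ e ∈ P₃.edges) :
    ¬ IsHamiltonianGraph G := by
  rintro ⟨a, c, hc, hham⟩
  have hcl₁ : ∀ v z, v ∈ P₁.support → v ≠ k₁ → v ≠ l → s(v,z) ∈ G.edgeSet → s(v,z) ∈ P₁.edges := by
    intro v z hv hvk hvl he
    have hv2 : v ∉ P₂.support := fun h => hvl (h12 v hv h)
    have hv3 : v ∉ P₃.support := fun h => hvl (h13 v hv h)
    have hk2 : v ≠ k₂ := fun h => hv2 (h ▸ P₂.start_mem_support)
    have hk3 : v ≠ k₃ := fun h => hv3 (h ▸ P₃.start_mem_support)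
    rcases hE _ he with h|h|h|h|h|h|h|h|h
    · rw [Sym2.eq_iff] at h; tauto
    · rw [Sym2.eq_iff] at h; tauto
    · rw [Sym2.eq_iff] at h; tauto
    · rw [Sym2.eq_iff] at h; tauto
    · rw [Sym2.eq_iff] at h; tauto
    · rw [Sym2.eq_iff] at h; tauto
    · exact h
    · exact absurd (P₂.fst_mem_support_of_mem_edges h) hv2
    · exact absurd (P₃.fst_mem_support_of_mem_edges h) hv3
  have hcl₂ : ∀ v z, v ∈ P₂.support → v ≠ k₂ → v ≠ l → s(v,z) ∈ G.edgeSet → s(v,z) ∈ P₂.edges := by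
    intro v z hv hvk hvl he
    have hv1 : v ∉ P₁.support := fun h => hvl (h12 v h hv)
    have hv3 : v ∉ P₃.support := fun h => hvl (h23 v hv h)
    have hk1 : v ≠ k₁ := fun h => hv1 (h ▸ P₁.start_mem_support)
    have hk3 : v ≠ k₃ := fun h => hv3 (h ▸ P₃.start_mem_support)
    rcases hE _ he with h|h|h|h|h|h|h|h|h
    · rw [Sym2.eq_iff] at h; tauto
    · rw [Sym2.eq_iff] at h; tauto
    · rw [Sym2.eq_iff] at h; tauto
    · rw [Sym2.eq_iff] at h; tauto
    · rw [Sym2.eq_iff] at h; tauto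
    · rw [Sym2.eq_iff] at h; tauto
    · exact absurd (P₁.fst_mem_support_of_mem_edges h) hv1
    · exact h
    · exact absurd (P₃.fst_mem_support_of_mem_edges h) hv3
  have hcl₃ : ∀ v z, v ∈ P₃.support → v ≠ k₃ → v ≠ l → s(v,z) ∈ G.edgeSet → s(v,z) ∈ P₃.edges := by
    intro v z hv hvk hvl he
    have hv1 : v ∉ P₁.support := fun h => hvl (h13 v h hv)
    have hv2 : v ∉ P₂.support := fun h => hvl (h23 v h hv)
    have hk1 : v ≠ k₁ := fun h => hv1 (h ▸ P₁.start_mem_support)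
    have hk2 : v ≠ k₂ := fun h => hv2 (h ▸ P₂.start_mem_support)
    rcases hE _ he with h|h|h|h|h|h|h|h|h
    · rw [Sym2.eq_iff] at h; tauto
    · rw [Sym2.eq_iff] at h; tauto
    · rw [Sym2.eq_iff] at h; tauto
    · rw [Sym2.eq_iff] at h; tauto
    · rw [Sym2.eq_iff] at h; tauto
    · rw [Sym2.eq_iff] at h; tauto
    · exact absurd (P₁.fst_mem_support_of_mem_edges h) hv1
    · exact absurd (P₂.fst_mem_support_of_mem_edges h) hv2
    · exact h
  have hc₁ := path_edges_in_cycle hc hham hP₁ hl₁ hcl₁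
  have hc₂ := path_edges_in_cycle hc hham hP₂ hl₂ hcl₂
  have hc₃ := path_edges_in_cycle hc hham hP₃ hl₃ hcl₃
  obtain ⟨w₁, hw₁e, hw₁s, hw₁l, -⟩ := exists_penult hP₁ hl₁
  obtain ⟨w₂, hw₂e, hw₂s, hw₂l, -⟩ := exists_penult hP₂ hl₂
  obtain ⟨w₃, hw₃e, hw₃s, hw₃l, -⟩ := exists_penult hP₃ hl₃
  have d12 : w₁ ≠ w₂ := fun h => hw₁l (h12 w₁ hw₁s (h ▸ hw₂s))
  have d13 : w₁ ≠ w₃ := fun h => hw₁l (h13 w₁ hw₁s (h ▸ hw₃s))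
  have d23 : w₂ ≠ w₃ := fun h => hw₂l (h23 w₂ hw₂s (h ▸ hw₃s))
  exact cycle_no_three hc (hc₁ hw₁e) (hc₂ hw₂e) (hc₃ hw₃e) d12 d13 d23

private lemma not_sym2_eq {v z x y : V} (hx : v ≠ x) (hy : v ≠ y) : s(v,z) ≠ s(x,y) := by
  intro h
  rw [Sym2.eq_iff] at h
  rcases h with ⟨h,-⟩|⟨h,-⟩
  exacts [hx h, hy h]

private lemma sym2_first {v z x y : V} (h : s(v,z) = s(x,y)) (hy : v ≠ y) : z = y := by
  rw [Sym2.eq_iff] at h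
  rcases h with ⟨-,h2⟩|⟨h1,-⟩
  exacts [h2, absurd h1 hy]

private lemma sym2_second {v z x y : V} (h : s(v,z) = s(x,y)) (hx : v ≠ x) : z = x := by
  rw [Sym2.eq_iff] at h
  rcases h with ⟨h1,-⟩|⟨-,h2⟩
  exacts [absurd h1 hx, h2]

private lemma prism_final [DecidableEq V] {a ki li kj ui wi : V} {c : G.Walk a a}
    {Pi : G.Walk ki li}
    (hc : c.IsCycle) (hham : ∀ x, x ∈ c.support)
    (hsp : s(ki,li) ∈ c.edges)
    (hui : s(ki,ui) ∈ c.edges) (hwi : s(li,wi) ∈ c.edges)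
    (huiS : ui ∈ Pi.support) (hwiS : wi ∈ Pi.support)
    (huil : ui ≠ li) (hwik : wi ≠ ki)
    (hkj : kj ∉ Pi.support)
    (hCE : ∀ u v, s(u,v) ∈ c.edges → u ∈ Pi.support → v ∉ Pi.support →
          u = ki ∨ u = li) : False := by
  have hkiS : ki ∈ Pi.support := Pi.start_mem_support
  have hliS : li ∈ Pi.support := Pi.end_mem_support
  refine closed_set_contra (S := {x | x ∈ Pi.support}) hham hkiS hkj ?_
  intro u v he hu
  by_contra hvn
  rcases hCE u v he hu hvn with h | h
  · rw [h] at he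
    have h2 : ui ≠ v := fun hh => hvn (hh ▸ huiS)
    have h3 : li ≠ v := fun hh => hvn (hh ▸ hliS)
    exact cycle_no_three hc hui hsp he huil h2 h3
  · rw [h] at he
    have hsp' : s(li,ki) ∈ c.edges := by rwa [Sym2.eq_swap] at hsp
    have h2 : wi ≠ v := fun hh => hvn (hh ▸ hwiS)
    have h3 : ki ≠ v := fun hh => hvn (hh ▸ hkiS)
    exact cycle_no_three hc hwi hsp' he hwik h2 h3

set_option maxHeartbeats 1000000 in
private lemma prism_core [DecidableEq V] {k₁ k₂ k₃ l₁ l₂ l₃ : V}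
    {P₁ : G.Walk k₁ l₁} {P₂ : G.Walk k₂ l₂} {P₃ : G.Walk k₃ l₃}
    (hP₁ : P₁.IsPath) (hP₂ : P₂.IsPath) (hP₃ : P₃.IsPath)
    (hl₁ : 2 ≤ P₁.length) (hl₂ : 2 ≤ P₂.length) (hl₃ : 2 ≤ P₃.length)
    (h12 : ∀ x, x ∈ P₁.support → x ∉ P₂.support)
    (h13 : ∀ x, x ∈ P₁.support → x ∉ P₃.support)
    (h23 : ∀ x, x ∈ P₂.support → x ∉ P₃.support)
    (hE : ∀ e ∈ G.edgeSet, e = s(k₁,k₂) ∨ e = s(k₂,k₃) ∨ e = s(k₁,k₃) ∨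
      e = s(l₁,l₂) ∨ e = s(l₂,l₃) ∨ e = s(l₁,l₃) ∨
      e = s(k₁,l₁) ∨ e = s(k₂,l₂) ∨ e = s(k₃,l₃) ∨
      e ∈ P₁.edges ∨ e ∈ P₂.edges ∨ e ∈ P₃.edges) :
    ¬ IsHamiltonianGraph G := by
  rintro ⟨a, c, hc, hham⟩
  have sk₁ : k₁ ∈ P₁.support := P₁.start_mem_support
  have sk₂ : k₂ ∈ P₂.support := P₂.start_mem_support
  have sk₃ : k₃ ∈ P₃.support := P₃.start_mem_support
  have sl₁ : l₁ ∈ P₁.support := P₁.end_mem_support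
  have sl₂ : l₂ ∈ P₂.support := P₂.end_mem_support
  have sl₃ : l₃ ∈ P₃.support := P₃.end_mem_support
  have a12 : k₁ ∉ P₂.support := h12 k₁ sk₁
  have a13 : k₁ ∉ P₃.support := h13 k₁ sk₁
  have b12 : l₁ ∉ P₂.support := h12 l₁ sl₁
  have b13 : l₁ ∉ P₃.support := h13 l₁ sl₁
  have a21 : k₂ ∉ P₁.support := fun h => h12 k₂ h sk₂
  have a23 : k₂ ∉ P₃.support := h23 k₂ sk₂
  have b21 : l₂ ∉ P₁.support := fun h => h12 l₂ h sl₂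
  have b23 : l₂ ∉ P₃.support := h23 l₂ sl₂
  have a31 : k₃ ∉ P₁.support := fun h => h13 k₃ h sk₃
  have a32 : k₃ ∉ P₂.support := fun h => h23 k₃ h sk₃
  have b31 : l₃ ∉ P₁.support := fun h => h13 l₃ h sl₃
  have b32 : l₃ ∉ P₂.support := fun h => h23 l₃ h sl₃
  have hkl₁ : k₁ ≠ l₁ := by
    rintro rfl
    have h0 : P₁ = Walk.nil := isPath_iff_eq_nil.mp hP₁
    rw [h0] at hl₁; simp at hl₁
  have hkl₂ : k₂ ≠ l₂ := by
    rintro rfl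
    have h0 : P₂ = Walk.nil := isPath_iff_eq_nil.mp hP₂
    rw [h0] at hl₂; simp at hl₂
  have hkl₃ : k₃ ≠ l₃ := by
    rintro rfl
    have h0 : P₃ = Walk.nil := isPath_iff_eq_nil.mp hP₃
    rw [h0] at hl₃; simp at hl₃
  have nk₁₂ : k₁ ≠ k₂ := fun h => a12 (h ▸ sk₂)
  have nk₁₃ : k₁ ≠ k₃ := fun h => a13 (h ▸ sk₃)
  have nk₂₃ : k₂ ≠ k₃ := fun h => a23 (h ▸ sk₃)
  have nl₁₂ : l₁ ≠ l₂ := fun h => b12 (h ▸ sl₂)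
  have nl₁₃ : l₁ ≠ l₃ := fun h => b13 (h ▸ sl₃)
  have nl₂₃ : l₂ ≠ l₃ := fun h => b23 (h ▸ sl₃)
  have nk₁l₂ : k₁ ≠ l₂ := fun h => a12 (h ▸ sl₂)
  have nk₁l₃ : k₁ ≠ l₃ := fun h => a13 (h ▸ sl₃)
  have nk₂l₁ : k₂ ≠ l₁ := fun h => a21 (h ▸ sl₁)
  have nk₂l₃ : k₂ ≠ l₃ := fun h => a23 (h ▸ sl₃)
  have nk₃l₁ : k₃ ≠ l₁ := fun h => a31 (h ▸ sl₁)
  have nk₃l₂ : k₃ ≠ l₂ := fun h => a32 (h ▸ sl₂)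
  have hcl₁ : ∀ v z, v ∈ P₁.support → v ≠ k₁ → v ≠ l₁ → s(v,z) ∈ G.edgeSet → s(v,z) ∈ P₁.edges := by
    intro v z hv hvk hvl he
    have hv2 : v ∉ P₂.support := h12 v hv
    have hv3 : v ∉ P₃.support := h13 v hv
    have e1 : v ≠ k₂ := fun h => hv2 (h ▸ sk₂)
    have e2 : v ≠ k₃ := fun h => hv3 (h ▸ sk₃)
    have e3 : v ≠ l₂ := fun h => hv2 (h ▸ sl₂)
    have e4 : v ≠ l₃ := fun h => hv3 (h ▸ sl₃)
    rcases hE _ he with h|h|h|h|h|h|h|h|h|h|h|h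
    · exact absurd h (not_sym2_eq hvk e1)
    · exact absurd h (not_sym2_eq e1 e2)
    · exact absurd h (not_sym2_eq hvk e2)
    · exact absurd h (not_sym2_eq hvl e3)
    · exact absurd h (not_sym2_eq e3 e4)
    · exact absurd h (not_sym2_eq hvl e4)
    · exact absurd h (not_sym2_eq hvk hvl)
    · exact absurd h (not_sym2_eq e1 e3)
    · exact absurd h (not_sym2_eq e2 e4)
    · exact h
    · exact absurd (P₂.fst_mem_support_of_mem_edges h) hv2
    · exact absurd (P₃.fst_mem_support_of_mem_edges h) hv3
  have hcl₂ : ∀ v z, v ∈ P₂.support → v ≠ k₂ → v ≠ l₂ → s(v,z) ∈ G.edgeSet → s(v,z) ∈ P₂.edges := by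
    intro v z hv hvk hvl he
    have hv1 : v ∉ P₁.support := fun h => h12 v h hv
    have hv3 : v ∉ P₃.support := h23 v hv
    have e1 : v ≠ k₁ := fun h => hv1 (h ▸ sk₁)
    have e2 : v ≠ k₃ := fun h => hv3 (h ▸ sk₃)
    have e3 : v ≠ l₁ := fun h => hv1 (h ▸ sl₁)
    have e4 : v ≠ l₃ := fun h => hv3 (h ▸ sl₃)
    rcases hE _ he with h|h|h|h|h|h|h|h|h|h|h|h
    · exact absurd h (not_sym2_eq e1 hvk)
    · exact absurd h (not_sym2_eq hvk e2)
    · exact absurd h (not_sym2_eq e1 e2)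
    · exact absurd h (not_sym2_eq e3 hvl)
    · exact absurd h (not_sym2_eq hvl e4)
    · exact absurd h (not_sym2_eq e3 e4)
    · exact absurd h (not_sym2_eq e1 e3)
    · exact absurd h (not_sym2_eq hvk hvl)
    · exact absurd h (not_sym2_eq e2 e4)
    · exact absurd (P₁.fst_mem_support_of_mem_edges h) hv1
    · exact h
    · exact absurd (P₃.fst_mem_support_of_mem_edges h) hv3
  have hcl₃ : ∀ v z, v ∈ P₃.support → v ≠ k₃ → v ≠ l₃ → s(v,z) ∈ G.edgeSet → s(v,z) ∈ P₃.edges := by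
    intro v z hv hvk hvl he
    have hv1 : v ∉ P₁.support := fun h => h13 v h hv
    have hv2 : v ∉ P₂.support := fun h => h23 v h hv
    have e1 : v ≠ k₁ := fun h => hv1 (h ▸ sk₁)
    have e2 : v ≠ k₂ := fun h => hv2 (h ▸ sk₂)
    have e3 : v ≠ l₁ := fun h => hv1 (h ▸ sl₁)
    have e4 : v ≠ l₂ := fun h => hv2 (h ▸ sl₂)
    rcases hE _ he with h|h|h|h|h|h|h|h|h|h|h|h
    · exact absurd h (not_sym2_eq e1 e2)
    · exact absurd h (not_sym2_eq e2 hvk)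
    · exact absurd h (not_sym2_eq e1 hvk)
    · exact absurd h (not_sym2_eq e3 e4)
    · exact absurd h (not_sym2_eq e4 hvl)
    · exact absurd h (not_sym2_eq e3 hvl)
    · exact absurd h (not_sym2_eq e1 e3)
    · exact absurd h (not_sym2_eq e2 e4)
    · exact absurd h (not_sym2_eq hvk hvl)
    · exact absurd (P₁.fst_mem_support_of_mem_edges h) hv1
    · exact absurd (P₂.fst_mem_support_of_mem_edges h) hv2
    · exact h
  have hc₁ := path_edges_in_cycle hc hham hP₁ hl₁ hcl₁
  have hc₂ := path_edges_in_cycle hc hham hP₂ hl₂ hcl₂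
  have hc₃ := path_edges_in_cycle hc hham hP₃ hl₃ hcl₃
  obtain ⟨u₁, hu₁e, hu₁s, hu₁k, hu₁l⟩ := exists_second hP₁ hl₁
  obtain ⟨u₂, hu₂e, hu₂s, hu₂k, hu₂l⟩ := exists_second hP₂ hl₂
  obtain ⟨u₃, hu₃e, hu₃s, hu₃k, hu₃l⟩ := exists_second hP₃ hl₃
  obtain ⟨w₁, hw₁e, hw₁s, hw₁l, hw₁k⟩ := exists_penult hP₁ hl₁
  obtain ⟨w₂, hw₂e, hw₂s, hw₂l, hw₂k⟩ := exists_penult hP₂ hl₂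
  obtain ⟨w₃, hw₃e, hw₃s, hw₃l, hw₃k⟩ := exists_penult hP₃ hl₃
  have hu₁c : s(k₁,u₁) ∈ c.edges := hc₁ hu₁e
  have hu₂c : s(k₂,u₂) ∈ c.edges := hc₂ hu₂e
  have hu₃c : s(k₃,u₃) ∈ c.edges := hc₃ hu₃e
  have hw₁c : s(l₁,w₁) ∈ c.edges := hc₁ hw₁e
  have hw₂c : s(l₂,w₂) ∈ c.edges := hc₂ hw₂e
  have hw₃c : s(l₃,w₃) ∈ c.edges := hc₃ hw₃e
  have nu₁k₂ : u₁ ≠ k₂ := fun h => a21 (h ▸ hu₁s)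
  have nu₁k₃ : u₁ ≠ k₃ := fun h => a31 (h ▸ hu₁s)
  have nu₂k₁ : u₂ ≠ k₁ := fun h => a12 (h ▸ hu₂s)
  have nu₂k₃ : u₂ ≠ k₃ := fun h => a32 (h ▸ hu₂s)
  have nu₃k₁ : u₃ ≠ k₁ := fun h => a13 (h ▸ hu₃s)
  have nu₃k₂ : u₃ ≠ k₂ := fun h => a23 (h ▸ hu₃s)
  have hCE₁ : ∀ u v, s(u,v) ∈ c.edges → u ∈ P₁.support → v ∉ P₁.support → u = k₁ ∨ u = l₁ := by
    intro u v he hu hv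
    rcases hE _ (c.edges_subset_edgeSet he) with h|h|h|h|h|h|h|h|h|h|h|h
    · rcases Sym2.eq_iff.mp h with ⟨h1,h2⟩|⟨h1,h2⟩
      · exact Or.inl h1
      · exact absurd (h1 ▸ hu) a21
    · rcases Sym2.eq_iff.mp h with ⟨h1,h2⟩|⟨h1,h2⟩
      · exact absurd (h1 ▸ hu) a21
      · exact absurd (h1 ▸ hu) a31
    · rcases Sym2.eq_iff.mp h with ⟨h1,h2⟩|⟨h1,h2⟩
      · exact Or.inl h1
      · exact absurd (h1 ▸ hu) a31
    · rcases Sym2.eq_iff.mp h with ⟨h1,h2⟩|⟨h1,h2⟩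
      · exact Or.inr h1
      · exact absurd (h1 ▸ hu) b21
    · rcases Sym2.eq_iff.mp h with ⟨h1,h2⟩|⟨h1,h2⟩
      · exact absurd (h1 ▸ hu) b21
      · exact absurd (h1 ▸ hu) b31
    · rcases Sym2.eq_iff.mp h with ⟨h1,h2⟩|⟨h1,h2⟩
      · exact Or.inr h1
      · exact absurd (h1 ▸ hu) b31
    · rcases Sym2.eq_iff.mp h with ⟨h1,h2⟩|⟨h1,h2⟩
      · exact absurd (h2.symm ▸ sl₁) hv
      · exact absurd (h2.symm ▸ sk₁) hv
    · rcases Sym2.eq_iff.mp h with ⟨h1,h2⟩|⟨h1,h2⟩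
      · exact absurd (h1 ▸ hu) a21
      · exact absurd (h1 ▸ hu) b21
    · rcases Sym2.eq_iff.mp h with ⟨h1,h2⟩|⟨h1,h2⟩
      · exact absurd (h1 ▸ hu) a31
      · exact absurd (h1 ▸ hu) b31
    · exact absurd (P₁.snd_mem_support_of_mem_edges h) hv
    · exact absurd (P₂.fst_mem_support_of_mem_edges h) (h12 u hu)
    · exact absurd (P₃.fst_mem_support_of_mem_edges h) (h13 u hu)
  have hCE₂ : ∀ u v, s(u,v) ∈ c.edges → u ∈ P₂.support → v ∉ P₂.support → u = k₂ ∨ u = l₂ := by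
    intro u v he hu hv
    rcases hE _ (c.edges_subset_edgeSet he) with h|h|h|h|h|h|h|h|h|h|h|h
    · rcases Sym2.eq_iff.mp h with ⟨h1,h2⟩|⟨h1,h2⟩
      · exact absurd (h1 ▸ hu) a12
      · exact Or.inl h1
    · rcases Sym2.eq_iff.mp h with ⟨h1,h2⟩|⟨h1,h2⟩
      · exact Or.inl h1
      · exact absurd (h1 ▸ hu) a32
    · rcases Sym2.eq_iff.mp h with ⟨h1,h2⟩|⟨h1,h2⟩
      · exact absurd (h1 ▸ hu) a12
      · exact absurd (h1 ▸ hu) a32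
    · rcases Sym2.eq_iff.mp h with ⟨h1,h2⟩|⟨h1,h2⟩
      · exact absurd (h1 ▸ hu) b12
      · exact Or.inr h1
    · rcases Sym2.eq_iff.mp h with ⟨h1,h2⟩|⟨h1,h2⟩
      · exact Or.inr h1
      · exact absurd (h1 ▸ hu) b32
    · rcases Sym2.eq_iff.mp h with ⟨h1,h2⟩|⟨h1,h2⟩
      · exact absurd (h1 ▸ hu) b12
      · exact absurd (h1 ▸ hu) b32
    · rcases Sym2.eq_iff.mp h with ⟨h1,h2⟩|⟨h1,h2⟩
      · exact absurd (h1 ▸ hu) a12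
      · exact absurd (h1 ▸ hu) b12
    · rcases Sym2.eq_iff.mp h with ⟨h1,h2⟩|⟨h1,h2⟩
      · exact absurd (h2.symm ▸ sl₂) hv
      · exact absurd (h2.symm ▸ sk₂) hv
    · rcases Sym2.eq_iff.mp h with ⟨h1,h2⟩|⟨h1,h2⟩
      · exact absurd (h1 ▸ hu) a32
      · exact absurd (h1 ▸ hu) b32
    · exact absurd (P₁.fst_mem_support_of_mem_edges h) (fun hh => h12 u hh hu)
    · exact absurd (P₂.snd_mem_support_of_mem_edges h) hv
    · exact absurd (P₃.fst_mem_support_of_mem_edges h) (h23 u hu)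
  have hCE₃ : ∀ u v, s(u,v) ∈ c.edges → u ∈ P₃.support → v ∉ P₃.support → u = k₃ ∨ u = l₃ := by
    intro u v he hu hv
    rcases hE _ (c.edges_subset_edgeSet he) with h|h|h|h|h|h|h|h|h|h|h|h
    · rcases Sym2.eq_iff.mp h with ⟨h1,h2⟩|⟨h1,h2⟩
      · exact absurd (h1 ▸ hu) a13
      · exact absurd (h1 ▸ hu) a23
    · rcases Sym2.eq_iff.mp h with ⟨h1,h2⟩|⟨h1,h2⟩
      · exact absurd (h1 ▸ hu) a23
      · exact Or.inl h1
    · rcases Sym2.eq_iff.mp h with ⟨h1,h2⟩|⟨h1,h2⟩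
      · exact absurd (h1 ▸ hu) a13
      · exact Or.inl h1
    · rcases Sym2.eq_iff.mp h with ⟨h1,h2⟩|⟨h1,h2⟩
      · exact absurd (h1 ▸ hu) b13
      · exact absurd (h1 ▸ hu) b23
    · rcases Sym2.eq_iff.mp h with ⟨h1,h2⟩|⟨h1,h2⟩
      · exact absurd (h1 ▸ hu) b23
      · exact Or.inr h1
    · rcases Sym2.eq_iff.mp h with ⟨h1,h2⟩|⟨h1,h2⟩
      · exact absurd (h1 ▸ hu) b13
      · exact Or.inr h1
    · rcases Sym2.eq_iff.mp h with ⟨h1,h2⟩|⟨h1,h2⟩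
      · exact absurd (h1 ▸ hu) a13
      · exact absurd (h1 ▸ hu) b13
    · rcases Sym2.eq_iff.mp h with ⟨h1,h2⟩|⟨h1,h2⟩
      · exact absurd (h1 ▸ hu) a23
      · exact absurd (h1 ▸ hu) b23
    · rcases Sym2.eq_iff.mp h with ⟨h1,h2⟩|⟨h1,h2⟩
      · exact absurd (h2.symm ▸ sl₃) hv
      · exact absurd (h2.symm ▸ sk₃) hv
    · exact absurd (P₁.fst_mem_support_of_mem_edges h) (fun hh => h13 u hh hu)
    · exact absurd (P₂.fst_mem_support_of_mem_edges h) (fun hh => h23 u hh hu)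
    · exact absurd (P₃.snd_mem_support_of_mem_edges h) hv
  obtain ⟨n₁, hn₁u, hn₁c, -⟩ := cycle_two_nbrs hc hu₁c
  have hn₁cls : n₁ = k₂ ∨ n₁ = k₃ ∨ n₁ = l₁ := by
    rcases hE _ (c.edges_subset_edgeSet hn₁c) with h|h|h|h|h|h|h|h|h|h|h|h
    · exact Or.inl (sym2_first h nk₁₂)
    · exact absurd h (not_sym2_eq nk₁₂ nk₁₃)
    · exact Or.inr (Or.inl (sym2_first h nk₁₃))
    · exact absurd h (not_sym2_eq hkl₁ nk₁l₂)
    · exact absurd h (not_sym2_eq nk₁l₂ nk₁l₃)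
    · exact absurd h (not_sym2_eq hkl₁ nk₁l₃)
    · exact Or.inr (Or.inr (sym2_first h hkl₁))
    · exact absurd h (not_sym2_eq nk₁₂ nk₁l₂)
    · exact absurd h (not_sym2_eq nk₁₃ nk₁l₃)
    · exact absurd (path_endpoint_unique hP₁ h hu₁e) hn₁u
    · exact absurd (P₂.fst_mem_support_of_mem_edges h) a12
    · exact absurd (P₃.fst_mem_support_of_mem_edges h) a13
  rcases hn₁cls with h | h | h
  · have hx12 : s(k₁,k₂) ∈ c.edges := by rwa [h] at hn₁c
    obtain ⟨n₃, hn₃u, hn₃c, -⟩ := cycle_two_nbrs hc hu₃c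
    have hn₃cls : n₃ = k₁ ∨ n₃ = k₂ ∨ n₃ = l₃ := by
      rcases hE _ (c.edges_subset_edgeSet hn₃c) with h'|h'|h'|h'|h'|h'|h'|h'|h'|h'|h'|h'
      · exact absurd h' (not_sym2_eq (Ne.symm nk₁₃) (Ne.symm nk₂₃))
      · exact Or.inr (Or.inl (sym2_second h' (Ne.symm nk₂₃)))
      · exact Or.inl (sym2_second h' (Ne.symm nk₁₃))
      · exact absurd h' (not_sym2_eq nk₃l₁ nk₃l₂)
      · exact absurd h' (not_sym2_eq nk₃l₂ hkl₃)
      · exact absurd h' (not_sym2_eq nk₃l₁ hkl₃)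
      · exact absurd h' (not_sym2_eq (Ne.symm nk₁₃) nk₃l₁)
      · exact absurd h' (not_sym2_eq (Ne.symm nk₂₃) nk₃l₂)
      · exact Or.inr (Or.inr (sym2_first h' hkl₃))
      · exact absurd (P₁.fst_mem_support_of_mem_edges h') a31
      · exact absurd (P₂.fst_mem_support_of_mem_edges h') a32
      · exact absurd (path_endpoint_unique hP₃ h' hu₃e) hn₃u
    rcases hn₃cls with h3 | h3 | h3
    · have hx13 : s(k₁,k₃) ∈ c.edges := by rw [h3] at hn₃c; rwa [Sym2.eq_swap] at hn₃c
      exact cycle_no_three hc hu₁c hx12 hx13 nu₁k₂ nu₁k₃ nk₂₃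
    · have hx21 : s(k₂,k₁) ∈ c.edges := by rwa [Sym2.eq_swap] at hx12
      have hx23 : s(k₂,k₃) ∈ c.edges := by rw [h3] at hn₃c; rwa [Sym2.eq_swap] at hn₃c
      exact cycle_no_three hc hu₂c hx21 hx23 nu₂k₁ nu₂k₃ nk₁₃
    · have hsp3 : s(k₃,l₃) ∈ c.edges := by rwa [h3] at hn₃c
      exact prism_final hc hham hsp3 hu₃c hw₃c hu₃s hw₃s hu₃l hw₃k a13 hCE₃
  · have hx13 : s(k₁,k₃) ∈ c.edges := by rwa [h] at hn₁c
    obtain ⟨n₂, hn₂u, hn₂c, -⟩ := cycle_two_nbrs hc hu₂c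
    have hn₂cls : n₂ = k₁ ∨ n₂ = k₃ ∨ n₂ = l₂ := by
      rcases hE _ (c.edges_subset_edgeSet hn₂c) with h'|h'|h'|h'|h'|h'|h'|h'|h'|h'|h'|h'
      · exact Or.inl (sym2_second h' (Ne.symm nk₁₂))
      · exact Or.inr (Or.inl (sym2_first h' nk₂₃))
      · exact absurd h' (not_sym2_eq (Ne.symm nk₁₂) nk₂₃)
      · exact absurd h' (not_sym2_eq nk₂l₁ hkl₂)
      · exact absurd h' (not_sym2_eq hkl₂ nk₂l₃)
      · exact absurd h' (not_sym2_eq nk₂l₁ nk₂l₃)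
      · exact absurd h' (not_sym2_eq (Ne.symm nk₁₂) nk₂l₁)
      · exact Or.inr (Or.inr (sym2_first h' hkl₂))
      · exact absurd h' (not_sym2_eq nk₂₃ nk₂l₃)
      · exact absurd (P₁.fst_mem_support_of_mem_edges h') a21
      · exact absurd (path_endpoint_unique hP₂ h' hu₂e) hn₂u
      · exact absurd (P₃.fst_mem_support_of_mem_edges h') a23
    rcases hn₂cls with h2 | h2 | h2
    · have hx12 : s(k₁,k₂) ∈ c.edges := by rw [h2] at hn₂c; rwa [Sym2.eq_swap] at hn₂c
      exact cycle_no_three hc hu₁c hx13 hx12 nu₁k₃ nu₁k₂ (Ne.symm nk₂₃)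
    · have hx31 : s(k₃,k₁) ∈ c.edges := by rwa [Sym2.eq_swap] at hx13
      have hx32 : s(k₃,k₂) ∈ c.edges := by rw [h2] at hn₂c; rwa [Sym2.eq_swap] at hn₂c
      exact cycle_no_three hc hu₃c hx31 hx32 nu₃k₁ nu₃k₂ nk₁₂
    · have hsp2 : s(k₂,l₂) ∈ c.edges := by rwa [h2] at hn₂c
      exact prism_final hc hham hsp2 hu₂c hw₂c hu₂s hw₂s hu₂l hw₂k a12 hCE₂
  · have hsp1 : s(k₁,l₁) ∈ c.edges := by rwa [h] at hn₁c
    exact prism_final hc hham hsp1 hu₁c hw₁c hu₁s hw₁s hu₁l hw₁k a21 hCE₁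

end Toolbox

/-- No prism, prism⁺, pyramid, or pyramid⁺ has a Hamiltonian cycle. -/
theorem prism_pyramid_not_hamiltonian {V : Type u} [Fintype V] (G : SimpleGraph V)
    (hG : IsPrism G ∨ IsPrismPlus G ∨ IsPyramid G ∨ IsPyramidPlus G) :
    ¬ IsHamiltonianGraph G := by
  classical
  rcases hG with h | h | h | h
  · obtain ⟨k₁,k₂,k₃,l₁,l₂,l₃,P₁,P₂,P₃,-,-,-,-,-,-,hP₁,hP₂,hP₃,hl₁,hl₂,hl₃,h12,h13,h23,-,hE⟩ := h
    exact prism_core hP₁ hP₂ hP₃ hl₁ hl₂ hl₃ h12 h13 h23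
      (fun e he => by rcases hE e he with h|h|h|h|h|h|h|h|h <;> tauto)
  · obtain ⟨k₁,k₂,k₃,l₁,l₂,l₃,P₁,P₂,P₃,b₁,b₂,b₃,-,-,-,-,-,-,-,-,-,-,hP₁,hP₂,hP₃,hl₁,hl₂,hl₃,h12,h13,h23,-,hE⟩ := h
    exact prism_core hP₁ hP₂ hP₃ hl₁ hl₂ hl₃ h12 h13 h23
      (fun e he => by rcases hE e he with h|h|h|h|h|h|h|h|h|h|h|h <;> tauto)
  · obtain ⟨k₁,k₂,k₃,l,P₁,P₂,P₃,-,-,-,hP₁,hP₂,hP₃,hl₁,hl₂,hl₃,h12,h13,h23,-,hE⟩ := h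
    exact pyramid_core hP₁ hP₂ hP₃ hl₁ hl₂ hl₃ h12 h13 h23
      (fun e he => by rcases hE e he with h|h|h|h|h|h <;> tauto)
  · obtain ⟨k₁,k₂,k₃,l,P₁,P₂,P₃,b₁,b₂,b₃,-,-,-,-,-,-,-,hP₁,hP₂,hP₃,hl₁,hl₂,hl₃,h12,h13,h23,-,hE⟩ := h
    exact pyramid_core hP₁ hP₂ hP₃ hl₁ hl₂ hl₃ h12 h13 h23
      (fun e he => by rcases hE e he with h|h|h|h|h|h|h|h|h <;> tauto)
end

section
/- Let G be a 2-connected graph and let {u,v} be a set of two vertices of G such that the graph G − {u,v} obtained by deleting u and v has at least three connected components. Then G contains an induced subgraph isomorphic to a theta or to a theta+. -/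
open SimpleGraph

universe u

variable {V : Type u}

namespace ThetaAux
variable {V : Type u} {G : SimpleGraph V}



/-- Hom from an induced subgraph back to the ambient graph. -/
def valHom (G : SimpleGraph V) (S : Set V) : G.induce S →g G := ⟨Subtype.val, fun h => h⟩

lemma valHom_inj (S : Set V) : Function.Injective (valHom G S) := Subtype.val_injective

/-- Lift a walk whose support lies in `X` to the induced subgraph. -/
def toInduce (X : Set V) : ∀ {a b : V} (p : G.Walk a b) (ha : a ∈ X) (hb : b ∈ X),
    (∀ x ∈ p.support, x ∈ X) → (G.induce X).Walk ⟨a, ha⟩ ⟨b, hb⟩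
  | _, _, .nil, _, _, _ => .nil
  | _, _, .cons h q, ha, hb, hs =>
      .cons (by exact h) (toInduce X q (hs _ (by simp)) hb (fun x hx => hs x (by simp [hx])))

lemma support_toInduce (X : Set V) : ∀ {a b : V} (p : G.Walk a b) (ha : a ∈ X) (hb : b ∈ X)
    (hs : ∀ x ∈ p.support, x ∈ X),
    (toInduce X p ha hb hs).support.map Subtype.val = p.support
  | _, _, .nil, _, _, _ => rfl
  | _, _, .cons h q, ha, hb, hs => by
      simp only [toInduce, Walk.support_cons, List.map_cons, List.cons_inj_right]
      exact congrArg (List.cons _) (support_toInduce X q _ _ _)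

lemma edges_toInduce (X : Set V) : ∀ {a b : V} (p : G.Walk a b) (ha : a ∈ X) (hb : b ∈ X)
    (hs : ∀ x ∈ p.support, x ∈ X),
    (toInduce X p ha hb hs).edges.map (Sym2.map Subtype.val) = p.edges
  | _, _, .nil, _, _, _ => rfl
  | _, _, .cons h q, ha, hb, hs => by
      simp only [toInduce, Walk.edges_cons, List.map_cons, Sym2.map_pair_eq, List.cons_inj_right]
      exact congrArg (List.cons _) (edges_toInduce X q _ _ _)

lemma length_toInduce (X : Set V) : ∀ {a b : V} (p : G.Walk a b) (ha : a ∈ X) (hb : b ∈ X)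
    (hs : ∀ x ∈ p.support, x ∈ X),
    (toInduce X p ha hb hs).length = p.length
  | _, _, .nil, _, _, _ => rfl
  | _, _, .cons h q, ha, hb, hs => by
      exact congrArg (· + 1) (length_toInduce X q _ _ _)




lemma exists_min_path {a b : V} (h : G.Reachable a b) :
    ∃ p : G.Walk a b, p.IsPath ∧ ∀ q : G.Walk a b, p.length ≤ q.length := by
  classical
  have hne : ∃ n, ∃ q : G.Walk a b, q.length = n := ⟨_, h.some, rfl⟩
  obtain ⟨m, hm⟩ := Nat.find_spec hne
  refine ⟨m.bypass, m.bypass_isPath, fun q => ?_⟩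
  calc m.bypass.length ≤ m.length := m.length_bypass_le
    _ = Nat.find hne := hm
    _ ≤ q.length := Nat.find_min' hne ⟨q, rfl⟩

lemma min_walk_chord : ∀ {a b : V} (p : G.Walk a b),
    (∀ q : G.Walk a b, p.length ≤ q.length) →
    ∀ x y, x ∈ p.support → y ∈ p.support → G.Adj x y → s(x, y) ∈ p.edges := by
  classical
  intro a b p
  induction p with
  | nil =>
    intro _ x y hx hy hadj
    simp only [Walk.support_nil, List.mem_singleton] at hx hy
    subst hx; subst hy
    exact absurd rfl hadj.ne
  | @cons a w b h q ih =>
    intro hmin x y hx hy hadj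
    have hqmin : ∀ r : G.Walk w b, q.length ≤ r.length := by
      intro r
      have := hmin (Walk.cons h r)
      simpa using this
    -- helper for the chord-from-start case
    have startCase : ∀ z, z ∈ q.support → G.Adj a z → s(a, z) ∈ (Walk.cons h q).edges := by
      intro z hz hz'
      by_cases hzw : z = w
      · subst hzw; simp
      · exfalso
        have hlen := hmin (Walk.cons hz' (q.dropUntil z hz))
        have hsplit : q.length = (q.takeUntil z hz).length + (q.dropUntil z hz).length := by
          conv_lhs => rw [← q.take_spec hz]
          exact Walk.length_append _ _
        simp only [Walk.length_cons] at hlen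
        have ht0 : (q.takeUntil z hz).length = 0 := by omega
        exact hzw (Walk.eq_of_length_eq_zero ht0).symm
    simp only [Walk.support_cons, List.mem_cons] at hx hy
    rcases hx with hx | hx <;> rcases hy with hy | hy
    · subst hx; subst hy; exact absurd rfl hadj.ne
    · subst hx; exact startCase y hy hadj
    · subst hy
      have := startCase x hx hadj.symm
      rwa [Sym2.eq_swap] at this
    · have := ih hqmin x y hx hy hadj
      simp [this]

lemma walk_length_one_adj : ∀ {a b : V} (p : G.Walk a b), p.length = 1 → G.Adj a b := by
  intro a b p
  cases p with
  | nil => simp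
  | cons h q =>
    intro hl
    simp only [Walk.length_cons, Nat.add_left_cancel_iff, Nat.add_eq_right] at hl
    rwa [Walk.eq_of_length_eq_zero hl] at h

lemma tail_walk {A : Set V} : ∀ {x y : V} (p : G.Walk x y), p.IsPath → x ∉ A →
    (∀ z ∈ p.support, z ≠ x → z ∈ A) → y ∈ A →
    ∃ (a : V) (ha : a ∈ A) (hy : y ∈ A), G.Adj x a ∧
      Nonempty ((G.induce A).Walk ⟨a, ha⟩ ⟨y, hy⟩) := by
  intro x y p hp hxA hsub hyA
  cases p with
  | nil => exact absurd hyA hxA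
  | @cons _ w _ h q =>
    have hxq : x ∉ q.support := by
      have := hp.support_nodup
      simp only [Walk.support_cons, List.nodup_cons] at this
      exact this.1
    have hqA : ∀ z ∈ q.support, z ∈ A := by
      intro z hz
      exact hsub z (by simp [hz]) (fun hzx => hxq (hzx ▸ hz))
    have hwA : w ∈ A := hqA w q.start_mem_support
    exact ⟨w, hwA, hyA, h, ⟨toInduce A q hwA hyA hqA⟩⟩

lemma comp_nbr (G : SimpleGraph V) (hdel : ∀ x : V, (G.induce ({x}ᶜ : Set V)).Connected)
    (t s : V) (hts : t ≠ s) {W : Set V} (hW : W = ({t, s}ᶜ : Set V))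
    (c : (G.induce W).ConnectedComponent) :
    ∃ (a : V) (ha : a ∈ W), (G.induce W).connectedComponentMk ⟨a, ha⟩ = c ∧ G.Adj t a := by
  classical
  subst hW
  obtain ⟨w, hw⟩ := c.exists_rep
  have hwW : (w : V) ∈ ({t, s}ᶜ : Set V) := w.2
  have hwts : (w : V) ≠ t ∧ (w : V) ≠ s := by
    have h' := hwW
    simp only [Set.mem_compl_iff, Set.mem_insert_iff, Set.mem_singleton_iff, not_or] at h'
    exact h'
  have hts' : t ∈ ({s}ᶜ : Set V) := by simpa using hts
  have hws' : (w : V) ∈ ({s}ᶜ : Set V) := by simpa using hwts.2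
  obtain ⟨p0⟩ := ((hdel s).preconnected ⟨t, hts'⟩ ⟨(w : V), hws'⟩ : _)
  set p1 : G.Walk t (w : V) := (p0.bypass).map (valHom G ({s}ᶜ : Set V)) with hp1
  have hp1path : p1.IsPath :=
    Walk.map_isPath_of_injective (f := valHom G ({s}ᶜ : Set V))
      (by exact Subtype.val_injective) p0.bypass_isPath
  have htA : t ∉ ({t, s}ᶜ : Set V) := by simp
  have hsubA : ∀ z ∈ p1.support, z ≠ t → z ∈ ({t, s}ᶜ : Set V) := by
    intro z hz hzt
    replace hz : z ∈ (p0.bypass.map (valHom G ({s}ᶜ : Set V))).support := hz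
    rw [Walk.support_map] at hz
    obtain ⟨z0, _, hz0⟩ := List.mem_map.mp hz
    have : z ≠ s := by
      have := z0.2
      simp only [Set.mem_compl_iff, Set.mem_singleton_iff] at this
      rw [← hz0]; exact this
    simp [hzt, this]
  obtain ⟨a, ha, hy, hadj, ⟨qi⟩⟩ := tail_walk p1 hp1path htA hsubA hwW
  refine ⟨a, ha, ?_, hadj⟩
  have : (⟨(w : V), hy⟩ : ({t, s}ᶜ : Set V)) = w := Subtype.ext rfl
  rw [← hw]
  exact ConnectedComponent.sound (this ▸ ⟨qi⟩)


lemma comp_path (G : SimpleGraph V) (u v : V) (huv : u ≠ v)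
    (hdel : ∀ x : V, (G.induce ({x}ᶜ : Set V)).Connected)
    (c : (G.induce ({u, v}ᶜ : Set V)).ConnectedComponent) :
    ∃ P : G.Walk u v, P.IsPath ∧ 2 ≤ P.length ∧
      (∀ x ∈ P.support, x = u ∨ x = v ∨ ∃ hx : x ∈ ({u, v}ᶜ : Set V),
        (G.induce ({u, v}ᶜ : Set V)).connectedComponentMk ⟨x, hx⟩ = c) ∧
      (∀ x y, x ∈ P.support → y ∈ P.support → G.Adj x y → s(x, y) ≠ s(u, v) →
        s(x, y) ∈ P.edges) := by
  classical
  obtain ⟨a, ha, hac, hua⟩ := comp_nbr G hdel u v huv rfl c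
  obtain ⟨b, hb, hbc, hvb⟩ := comp_nbr G hdel v u huv.symm (by rw [Set.pair_comm]) c
  have haW : a ≠ u ∧ a ≠ v := by
    have := ha; simp only [Set.mem_compl_iff, Set.mem_insert_iff,
      Set.mem_singleton_iff, not_or] at this; exact this
  have hbW : b ≠ u ∧ b ≠ v := by
    have := hb; simp only [Set.mem_compl_iff, Set.mem_insert_iff,
      Set.mem_singleton_iff, not_or] at this; exact this
  set S : Set V := {x | x = u ∨ x = v ∨ ∃ hx : x ∈ ({u, v}ᶜ : Set V),
    (G.induce ({u, v}ᶜ : Set V)).connectedComponentMk ⟨x, hx⟩ = c} with hSdef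
  set G' : SimpleGraph V := G.deleteEdges {s(u, v)} with hG'def
  -- adjacency facts in G'
  have hne_uv : ∀ x y : V, G.Adj x y → ¬ (x = u ∧ y = v ∨ x = v ∧ y = u) → G'.Adj x y := by
    intro x y hxy hne
    rw [hG'def, deleteEdges_adj]
    refine ⟨hxy, ?_⟩
    simp only [Set.mem_singleton_iff, Sym2.eq_iff]
    exact hne
  have h1 : G'.Adj u a := by
    refine hne_uv u a hua ?_
    rintro (⟨-, h⟩ | ⟨h, -⟩)
    · exact haW.2 h
    · exact huv h
  have h2 : G'.Adj b v := by
    refine hne_uv b v hvb.symm ?_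
    rintro (⟨h, -⟩ | ⟨-, h⟩)
    · exact hbW.1 h
    · exact huv h.symm
  -- a walk from a to b inside the component, as a G'-walk
  have hreach : (G.induce ({u, v}ᶜ : Set V)).Reachable ⟨a, ha⟩ ⟨b, hb⟩ :=
    ConnectedComponent.exact (hac.trans hbc.symm)
  obtain ⟨q⟩ := hreach
  have φadj : ∀ {x y : ({u, v}ᶜ : Set V)},
      (G.induce ({u, v}ᶜ : Set V)).Adj x y → G'.Adj (x : V) (y : V) := by
    intro x y hxy
    refine hne_uv (x : V) (y : V) hxy ?_
    have hx := x.2; have hy := y.2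
    simp only [Set.mem_compl_iff, Set.mem_insert_iff, Set.mem_singleton_iff,
      not_or] at hx hy
    rintro (⟨h, -⟩ | ⟨h, -⟩)
    · exact hx.1 h
    · exact hx.2 h
  set φ : G.induce ({u, v}ᶜ : Set V) →g G' := ⟨Subtype.val, φadj⟩ with hφdef
  set wbig : G'.Walk u v := Walk.cons h1 ((q.map φ).concat h2) with hwbig
  have hu : u ∈ S := Or.inl rfl
  have hv : v ∈ S := Or.inr (Or.inl rfl)
  have hSsub : ∀ x ∈ wbig.support, x ∈ S := by
    intro x hx
    rw [hwbig, Walk.support_cons] at hx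
    rcases List.mem_cons.mp hx with hx | hx
    · exact hx ▸ hu
    · rw [Walk.support_concat] at hx
      rcases List.mem_append.mp hx with hx | hx
      · rw [Walk.support_map] at hx
        obtain ⟨z0, hz0, rfl⟩ := List.mem_map.mp hx
        refine Or.inr (Or.inr ⟨z0.2, ?_⟩)
        have hre : (G.induce ({u, v}ᶜ : Set V)).Reachable ⟨a, ha⟩ z0 :=
          ⟨(q.takeUntil z0 hz0).copy rfl (Subtype.eta _ _)⟩
        calc (G.induce ({u, v}ᶜ : Set V)).connectedComponentMk ⟨(z0 : V), z0.2⟩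
            = (G.induce ({u, v}ᶜ : Set V)).connectedComponentMk z0 := by rw [Subtype.eta]
          _ = (G.induce ({u, v}ᶜ : Set V)).connectedComponentMk ⟨a, ha⟩ :=
              (ConnectedComponent.sound hre).symm
          _ = c := hac
      · rw [List.mem_singleton.mp hx]; exact hv
  have hreachS : (G'.induce S).Reachable ⟨u, hu⟩ ⟨v, hv⟩ := ⟨toInduce S wbig hu hv hSsub⟩
  obtain ⟨p, hppath, hpmin⟩ := exists_min_path hreachS
  have hchord := min_walk_chord p hpmin
  -- transfer back to G
  set P : G.Walk u v :=
    (p.map (valHom G' S)).map (Hom.ofLE (G.deleteEdges_le _)) with hPdef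
  have hPsupp : P.support = p.support.map Subtype.val := by
    show ((p.map (valHom G' S)).map (Hom.ofLE (G.deleteEdges_le _))).support = _
    rw [Walk.support_map, Walk.support_map, List.map_map]
    rfl
  have hPedges : P.edges = p.edges.map (Sym2.map Subtype.val) := by
    show ((p.map (valHom G' S)).map (Hom.ofLE (G.deleteEdges_le _))).edges = _
    rw [Walk.edges_map, Walk.edges_map, List.map_map]
    refine List.map_congr_left ?_
    intro e _
    induction e with
    | _ x y => rfl
  have hPlen : P.length = p.length := by
    show ((p.map (valHom G' S)).map (Hom.ofLE (G.deleteEdges_le _))).length = _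
    rw [Walk.length_map, Walk.length_map]
  have hPpath : P.IsPath := by
    rw [hPdef]
    refine Walk.map_isPath_of_injective (fun x y h => h) ?_
    exact Walk.map_isPath_of_injective (f := valHom G' S) (by exact Subtype.val_injective) hppath
  refine ⟨P, hPpath, ?_, ?_, ?_⟩
  · -- length ≥ 2
    rw [hPlen]
    rcases Nat.lt_or_ge p.length 2 with hlt | hge
    · exfalso
      interval_cases hl : p.length
      · have := Walk.eq_of_length_eq_zero hl
        exact huv (congrArg Subtype.val this)
      · have hadjS := walk_length_one_adj p hl
        have : G'.Adj u v := hadjS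
        rw [hG'def, deleteEdges_adj] at this
        exact this.2 rfl
    · exact hge
  · -- support condition
    intro x hx
    rw [hPsupp] at hx
    obtain ⟨z, -, rfl⟩ := List.mem_map.mp hx
    exact z.2
  · -- chordality
    intro x y hx hy hxy hne
    rw [hPsupp] at hx hy
    obtain ⟨zx, hzx, rfl⟩ := List.mem_map.mp hx
    obtain ⟨zy, hzy, rfl⟩ := List.mem_map.mp hy
    have hadjS : (G'.induce S).Adj zx zy := by
      have : G'.Adj (zx : V) (zy : V) := by
        rw [hG'def, deleteEdges_adj]
        exact ⟨hxy, by simpa using hne⟩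
      exact this
    have := hchord zx zy hzx hzy hadjS
    rw [hPedges]
    have hmem := List.mem_map_of_mem (f := Sym2.map Subtype.val) this
    simpa using hmem

lemma isPath_toInduce (X : Set V) {a b : V} (p : G.Walk a b) (ha : a ∈ X) (hb : b ∈ X)
    (hs : ∀ x ∈ p.support, x ∈ X) (hp : p.IsPath) : (toInduce X p ha hb hs).IsPath := by
  rw [Walk.isPath_def]
  have h := support_toInduce X p ha hb hs
  have h2 := hp.support_nodup
  rw [← h] at h2
  exact h2.of_map

lemma mem_support_toInduce (X : Set V) {a b : V} (p : G.Walk a b) (ha : a ∈ X) (hb : b ∈ X)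
    (hs : ∀ x ∈ p.support, x ∈ X) (z : X) (hz : (z : V) ∈ p.support) :
    z ∈ (toInduce X p ha hb hs).support := by
  rw [← support_toInduce X p ha hb hs] at hz
  obtain ⟨w, hw, hww⟩ := List.mem_map.mp hz
  exact Subtype.ext hww ▸ hw

lemma val_mem_support_toInduce (X : Set V) {a b : V} (p : G.Walk a b) (ha : a ∈ X) (hb : b ∈ X)
    (hs : ∀ x ∈ p.support, x ∈ X) (z : X) (hz : z ∈ (toInduce X p ha hb hs).support) :
    (z : V) ∈ p.support := by
  rw [← support_toInduce X p ha hb hs]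
  exact List.mem_map_of_mem hz

lemma mem_edges_toInduce (X : Set V) {a b : V} (p : G.Walk a b) (ha : a ∈ X) (hb : b ∈ X)
    (hs : ∀ x ∈ p.support, x ∈ X) (e : Sym2 X) (he : Sym2.map Subtype.val e ∈ p.edges) :
    e ∈ (toInduce X p ha hb hs).edges := by
  rw [← edges_toInduce X p ha hb hs] at he
  exact (List.mem_map_of_injective (Sym2.map.injective Subtype.val_injective)).mp he

end ThetaAux

/-- If deleting two vertices of a 2-connected graph leaves at
least three connected components, then the graph has an induced theta or
theta⁺. -/
theorem theta_of_three_components {V : Type u} [Fintype V] (G : SimpleGraph V)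
    (h2 : TwoConnected G) (u v : V) (huv : u ≠ v)
    (h3 : 3 ≤ Nat.card (G.induce ({u, v}ᶜ : Set V)).ConnectedComponent) :
    ∃ X : Set V, IsTheta (G.induce X) ∨ IsThetaPlus (G.induce X) := by
  classical
  obtain ⟨-, -, hdel⟩ := h2
  letI : Fintype (G.induce ({u, v}ᶜ : Set V)).ConnectedComponent := Fintype.ofFinite _
  rw [Nat.card_eq_fintype_card] at h3
  have h3' : 2 < Fintype.card (G.induce ({u, v}ᶜ : Set V)).ConnectedComponent := by omega
  obtain ⟨c₁, c₂, c₃, h12, h13, h23⟩ := Fintype.two_lt_card_iff.mp h3'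
  obtain ⟨P₁, hp₁, hl₁, hs₁, hc₁⟩ := ThetaAux.comp_path G u v huv hdel c₁
  obtain ⟨P₂, hp₂, hl₂, hs₂, hc₂⟩ := ThetaAux.comp_path G u v huv hdel c₂
  obtain ⟨P₃, hp₃, hl₃, hs₃, hc₃⟩ := ThetaAux.comp_path G u v huv hdel c₃
  set X : Set V := {x | x ∈ P₁.support ∨ x ∈ P₂.support ∨ x ∈ P₃.support} with hX
  have huX : u ∈ X := Or.inl P₁.start_mem_support
  have hvX : v ∈ X := Or.inl P₁.end_mem_support
  have hm₁ : ∀ x ∈ P₁.support, x ∈ X := fun x hx => Or.inl hx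
  have hm₂ : ∀ x ∈ P₂.support, x ∈ X := fun x hx => Or.inr (Or.inl hx)
  have hm₃ : ∀ x ∈ P₃.support, x ∈ X := fun x hx => Or.inr (Or.inr hx)
  set aX : ↥X := ⟨u, huX⟩ with haX
  set bX : ↥X := ⟨v, hvX⟩ with hbX
  set Q₁ := ThetaAux.toInduce X P₁ huX hvX hm₁ with hQ₁
  set Q₂ := ThetaAux.toInduce X P₂ huX hvX hm₂ with hQ₂
  set Q₃ := ThetaAux.toInduce X P₃ huX hvX hm₃ with hQ₃
  have hab : aX ≠ bX := fun h => huv (congrArg Subtype.val h)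
  have hqp₁ : Q₁.IsPath := ThetaAux.isPath_toInduce X P₁ huX hvX hm₁ hp₁
  have hqp₂ : Q₂.IsPath := ThetaAux.isPath_toInduce X P₂ huX hvX hm₂ hp₂
  have hqp₃ : Q₃.IsPath := ThetaAux.isPath_toInduce X P₃ huX hvX hm₃ hp₃
  have hql₁ : 2 ≤ Q₁.length := by rw [hQ₁, ThetaAux.length_toInduce]; exact hl₁
  have hql₂ : 2 ≤ Q₂.length := by rw [hQ₂, ThetaAux.length_toInduce]; exact hl₂
  have hql₃ : 2 ≤ Q₃.length := by rw [hQ₃, ThetaAux.length_toInduce]; exact hl₃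
  have disj : ∀ (c d : (G.induce ({u, v}ᶜ : Set V)).ConnectedComponent), c ≠ d →
      ∀ (P Q : G.Walk u v),
      (∀ z ∈ P.support, z = u ∨ z = v ∨ ∃ hz : z ∈ ({u, v}ᶜ : Set V),
        (G.induce ({u, v}ᶜ : Set V)).connectedComponentMk ⟨z, hz⟩ = c) →
      (∀ z ∈ Q.support, z = u ∨ z = v ∨ ∃ hz : z ∈ ({u, v}ᶜ : Set V),
        (G.induce ({u, v}ᶜ : Set V)).connectedComponentMk ⟨z, hz⟩ = d) →
      ∀ x, x ∈ P.support → x ∈ Q.support → x = u ∨ x = v := by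
    intro c d hcd P Q hsP hsQ x hxP hxQ
    rcases hsP x hxP with h | h | ⟨hw, hc⟩
    · exact Or.inl h
    · exact Or.inr h
    rcases hsQ x hxQ with h | h | ⟨hw', hd⟩
    · exact Or.inl h
    · exact Or.inr h
    exact absurd (hc.symm.trans hd) hcd
  have qdisj : ∀ {P Q : G.Walk u v} (hmP : ∀ x ∈ P.support, x ∈ X)
      (hmQ : ∀ x ∈ Q.support, x ∈ X),
      (∀ x, x ∈ P.support → x ∈ Q.support → x = u ∨ x = v) →
      ∀ z, z ∈ (ThetaAux.toInduce X P huX hvX hmP).support →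
        z ∈ (ThetaAux.toInduce X Q huX hvX hmQ).support → z = aX ∨ z = bX := by
    intro P Q hmP hmQ h z hzP hzQ
    have h1 := ThetaAux.val_mem_support_toInduce X P huX hvX hmP z hzP
    have h2 := ThetaAux.val_mem_support_toInduce X Q huX hvX hmQ z hzQ
    rcases h (z : V) h1 h2 with h' | h'
    · exact Or.inl (Subtype.ext h')
    · exact Or.inr (Subtype.ext h')
  have hd₁₂ := qdisj hm₁ hm₂ (disj c₁ c₂ h12 P₁ P₂ hs₁ hs₂)
  have hd₁₃ := qdisj hm₁ hm₃ (disj c₁ c₃ h13 P₁ P₃ hs₁ hs₃)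
  have hd₂₃ := qdisj hm₂ hm₃ (disj c₂ c₃ h23 P₂ P₃ hs₂ hs₃)
  have hcov : ∀ z : ↥X, z ∈ Q₁.support ∨ z ∈ Q₂.support ∨ z ∈ Q₃.support := by
    intro z
    have hz : (z : V) ∈ P₁.support ∨ (z : V) ∈ P₂.support ∨ (z : V) ∈ P₃.support := z.2
    rcases hz with h | h | h
    · exact Or.inl (ThetaAux.mem_support_toInduce X P₁ huX hvX hm₁ z h)
    · exact Or.inr (Or.inl (ThetaAux.mem_support_toInduce X P₂ huX hvX hm₂ z h))
    · exact Or.inr (Or.inr (ThetaAux.mem_support_toInduce X P₃ huX hvX hm₃ z h))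
  have pairHelper : ∀ (c d : (G.induce ({u, v}ᶜ : Set V)).ConnectedComponent), c ≠ d →
      ∀ (P Q : G.Walk u v),
      (∀ z ∈ P.support, z = u ∨ z = v ∨ ∃ hz : z ∈ ({u, v}ᶜ : Set V),
        (G.induce ({u, v}ᶜ : Set V)).connectedComponentMk ⟨z, hz⟩ = c) →
      (∀ z ∈ Q.support, z = u ∨ z = v ∨ ∃ hz : z ∈ ({u, v}ᶜ : Set V),
        (G.induce ({u, v}ᶜ : Set V)).connectedComponentMk ⟨z, hz⟩ = d) →
      ∀ x y : V, x ∈ P.support → y ∈ Q.support → G.Adj x y →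
      (x ∈ Q.support ∧ y ∈ Q.support) ∨ (x ∈ P.support ∧ y ∈ P.support) := by
    intro c d hcd P Q hsP hsQ x y hx hy hadj
    rcases hsP x hx with h | h | ⟨hw, hc⟩
    · subst h; exact Or.inl ⟨Q.start_mem_support, hy⟩
    · subst h; exact Or.inl ⟨Q.end_mem_support, hy⟩
    rcases hsQ y hy with h | h | ⟨hw', hd⟩
    · subst h; exact Or.inr ⟨hx, P.start_mem_support⟩
    · subst h; exact Or.inr ⟨hx, P.end_mem_support⟩
    exfalso
    have hadj2 : (G.induce ({u, v}ᶜ : Set V)).Adj ⟨x, hw⟩ ⟨y, hw'⟩ := hadj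
    exact hcd (hc.symm.trans ((ConnectedComponent.sound hadj2.reachable).trans hd))
  have edgeMain : ∀ (x y : ↥X), (G.induce X).Adj x y →
      s(x, y) = s(aX, bX) ∨ s(x, y) ∈ Q₁.edges ∨ s(x, y) ∈ Q₂.edges ∨ s(x, y) ∈ Q₃.edges := by
    intro x y hadj
    have hadj' : G.Adj (x : V) (y : V) := hadj
    by_cases hsuv : s((x : V), (y : V)) = s(u, v)
    · left
      rcases Sym2.eq_iff.mp hsuv with ⟨hx, hy⟩ | ⟨hx, hy⟩
      · rw [show x = aX from Subtype.ext hx, show y = bX from Subtype.ext hy]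
      · rw [show x = bX from Subtype.ext hx, show y = aX from Subtype.ext hy, Sym2.eq_swap]
    · have hxX : (x : V) ∈ P₁.support ∨ (x : V) ∈ P₂.support ∨ (x : V) ∈ P₃.support := x.2
      have hyX : (y : V) ∈ P₁.support ∨ (y : V) ∈ P₂.support ∨ (y : V) ∈ P₃.support := y.2
      have mk1 : ∀ {P : G.Walk u v} (hmP : ∀ w ∈ P.support, w ∈ X),
          (∀ z w, z ∈ P.support → w ∈ P.support → G.Adj z w → s(z, w) ≠ s(u, v) →
            s(z, w) ∈ P.edges) →
          (x : V) ∈ P.support → (y : V) ∈ P.support →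
          s(x, y) ∈ (ThetaAux.toInduce X P huX hvX hmP).edges := by
        intro P hmP hcP hx' hy'
        refine ThetaAux.mem_edges_toInduce X P huX hvX hmP _ ?_
        rw [Sym2.map_pair_eq]
        exact hcP _ _ hx' hy' hadj' hsuv
      rcases hxX with hx | hx | hx <;> rcases hyX with hy | hy | hy
      · exact Or.inr (Or.inl (mk1 hm₁ hc₁ hx hy))
      · rcases pairHelper c₁ c₂ h12 P₁ P₂ hs₁ hs₂ _ _ hx hy hadj' with ⟨h1, h2⟩ | ⟨h1, h2⟩
        · exact Or.inr (Or.inr (Or.inl (mk1 hm₂ hc₂ h1 h2)))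
        · exact Or.inr (Or.inl (mk1 hm₁ hc₁ h1 h2))
      · rcases pairHelper c₁ c₃ h13 P₁ P₃ hs₁ hs₃ _ _ hx hy hadj' with ⟨h1, h2⟩ | ⟨h1, h2⟩
        · exact Or.inr (Or.inr (Or.inr (mk1 hm₃ hc₃ h1 h2)))
        · exact Or.inr (Or.inl (mk1 hm₁ hc₁ h1 h2))
      · rcases pairHelper c₂ c₁ h12.symm P₂ P₁ hs₂ hs₁ _ _ hx hy hadj' with ⟨h1, h2⟩ | ⟨h1, h2⟩
        · exact Or.inr (Or.inl (mk1 hm₁ hc₁ h1 h2))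
        · exact Or.inr (Or.inr (Or.inl (mk1 hm₂ hc₂ h1 h2)))
      · exact Or.inr (Or.inr (Or.inl (mk1 hm₂ hc₂ hx hy)))
      · rcases pairHelper c₂ c₃ h23 P₂ P₃ hs₂ hs₃ _ _ hx hy hadj' with ⟨h1, h2⟩ | ⟨h1, h2⟩
        · exact Or.inr (Or.inr (Or.inr (mk1 hm₃ hc₃ h1 h2)))
        · exact Or.inr (Or.inr (Or.inl (mk1 hm₂ hc₂ h1 h2)))
      · rcases pairHelper c₃ c₁ h13.symm P₃ P₁ hs₃ hs₁ _ _ hx hy hadj' with ⟨h1, h2⟩ | ⟨h1, h2⟩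
        · exact Or.inr (Or.inl (mk1 hm₁ hc₁ h1 h2))
        · exact Or.inr (Or.inr (Or.inr (mk1 hm₃ hc₃ h1 h2)))
      · rcases pairHelper c₃ c₂ h23.symm P₃ P₂ hs₃ hs₂ _ _ hx hy hadj' with ⟨h1, h2⟩ | ⟨h1, h2⟩
        · exact Or.inr (Or.inr (Or.inl (mk1 hm₂ hc₂ h1 h2)))
        · exact Or.inr (Or.inr (Or.inr (mk1 hm₃ hc₃ h1 h2)))
      · exact Or.inr (Or.inr (Or.inr (mk1 hm₃ hc₃ hx hy)))
  by_cases hGuv : G.Adj u v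
  · refine ⟨X, Or.inr ⟨aX, bX, Q₁, Q₂, Q₃, hab, (by exact hGuv), hqp₁, hqp₂, hqp₃,
      hql₁, hql₂, hql₃, hd₁₂, hd₁₃, hd₂₃, hcov, ?_⟩⟩
    intro e
    induction e using Sym2.ind with
    | _ x y =>
      intro he
      exact edgeMain x y ((G.induce X).mem_edgeSet.mp he)
  · refine ⟨X, Or.inl ⟨aX, bX, Q₁, Q₂, Q₃, hab, hqp₁, hqp₂, hqp₃,
      hql₁, hql₂, hql₃, hd₁₂, hd₁₃, hd₂₃, hcov, ?_⟩⟩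
    intro e
    induction e using Sym2.ind with
    | _ x y =>
      intro he
      have hadj := (G.induce X).mem_edgeSet.mp he
      rcases edgeMain x y hadj with h | h | h | h
      · exfalso
        rcases Sym2.eq_iff.mp h with ⟨hx, hy⟩ | ⟨hx, hy⟩
        · rw [hx, hy] at hadj
          exact hGuv hadj
        · rw [hx, hy] at hadj
          exact hGuv hadj.symm
      · exact Or.inl h
      · exact Or.inr (Or.inl h)
      · exact Or.inr (Or.inr h)
end

section
/- Let G be a 2-connected, wheel-free graph with no induced subgraph isomorphic to a theta or to a theta+, and suppose that G has no clique cutset of size one or two. Then G has no clique cutset at all. -/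
open SimpleGraph

universe u

variable {V : Type u}

namespace NCC

variable {G : SimpleGraph V}

/-- Lift a walk whose support lies in `X` to the induced subgraph. -/
def liftWalk {X : Set V} : ∀ {x y : V} (p : G.Walk x y)
    (_ : ∀ z ∈ p.support, z ∈ X) (hx : x ∈ X) (hy : y ∈ X),
    (G.induce X).Walk ⟨x, hx⟩ ⟨y, hy⟩
  | _, _, Walk.nil, _, _, _ => Walk.nil
  | _, _, Walk.cons (v := w) hadj q, h, hx, hy =>
    Walk.cons (by simpa using hadj)
      (liftWalk q (fun z hz => h z (by simp [hz])) (h w (by simp)) hy)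

lemma liftWalk_support {X : Set V} : ∀ {x y : V} (p : G.Walk x y)
    (h : ∀ z ∈ p.support, z ∈ X) (hx : x ∈ X) (hy : y ∈ X),
    (liftWalk p h hx hy).support.map Subtype.val = p.support
  | _, _, Walk.nil, _, _, _ => by simp [liftWalk]
  | _, _, Walk.cons hadj q, h, hx, hy => by
    simp [liftWalk, liftWalk_support q]

lemma liftWalk_edges {X : Set V} : ∀ {x y : V} (p : G.Walk x y)
    (h : ∀ z ∈ p.support, z ∈ X) (hx : x ∈ X) (hy : y ∈ X),
    (liftWalk p h hx hy).edges.map (Sym2.map Subtype.val) = p.edges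
  | _, _, Walk.nil, _, _, _ => by simp [liftWalk]
  | _, _, Walk.cons hadj q, h, hx, hy => by
    simp [liftWalk, liftWalk_edges q]

lemma liftWalk_length {X : Set V} : ∀ {x y : V} (p : G.Walk x y)
    (h : ∀ z ∈ p.support, z ∈ X) (hx : x ∈ X) (hy : y ∈ X),
    (liftWalk p h hx hy).length = p.length
  | _, _, Walk.nil, _, _, _ => by simp [liftWalk]
  | _, _, Walk.cons hadj q, h, hx, hy => by
    simp [liftWalk, liftWalk_length q]

lemma mem_liftWalk_support {X : Set V} {x y : V} (p : G.Walk x y)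
    (h : ∀ z ∈ p.support, z ∈ X) (hx : x ∈ X) (hy : y ∈ X) (z : ↥X) :
    z ∈ (liftWalk p h hx hy).support ↔ (z : V) ∈ p.support := by
  constructor
  · intro hz
    rw [← liftWalk_support p h hx hy]
    exact List.mem_map_of_mem hz
  · intro hz
    rw [← liftWalk_support p h hx hy] at hz
    obtain ⟨z', hz', hval⟩ := List.mem_map.1 hz
    rwa [show z = z' from Subtype.ext hval.symm]

lemma mem_liftWalk_edges {X : Set V} {x y : V} (p : G.Walk x y)
    (h : ∀ z ∈ p.support, z ∈ X) (hx : x ∈ X) (hy : y ∈ X) (z w : ↥X) :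
    s(z, w) ∈ (liftWalk p h hx hy).edges ↔ s((z : V), (w : V)) ∈ p.edges := by
  constructor
  · intro hz
    rw [← liftWalk_edges p h hx hy]
    have : s((z : V), (w : V)) = Sym2.map Subtype.val s(z, w) := by simp
    rw [this]
    exact List.mem_map_of_mem hz
  · intro hz
    rw [← liftWalk_edges p h hx hy] at hz
    obtain ⟨e', he', hval⟩ := List.mem_map.1 hz
    have : e' = s(z, w) := by
      apply Sym2.map.injective Subtype.val_injective
      rw [hval]; simp
    rwa [this] at he'

lemma liftWalk_isPath {X : Set V} {x y : V} (p : G.Walk x y)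
    (h : ∀ z ∈ p.support, z ∈ X) (hx : x ∈ X) (hy : y ∈ X) (hp : p.IsPath) :
    (liftWalk p h hx hy).IsPath := by
  rw [Walk.isPath_def]
  have := (Walk.isPath_def p).1 hp
  rw [← liftWalk_support p h hx hy] at this
  exact (List.Nodup.of_map _ this)



lemma support_of_length_zero {x y : V} (r : G.Walk x y) (h : r.length = 0) :
    r.support = [x] := by
  cases r with
  | nil => simp
  | cons h q => simp at h

lemma walk_cons_cases {x u : V} (r : G.Walk x u) (hne : x ≠ u) :
    ∃ (y : V) (h : G.Adj x y) (q : G.Walk y u), r = Walk.cons h q := by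
  cases r with
  | nil => exact absurd rfl hne
  | cons h q => exact ⟨_, h, q, rfl⟩

lemma mem_edges_of_suffix {u v z x y : V} {pre : G.Walk u z} {s : G.Walk z v} {p : G.Walk u v}
    (hps : pre.append s = p) (hp : p.IsPath)
    (hx : x ∈ s.support) (hy : y ∈ s.support) (hxy : x ≠ y)
    (he : s(x, y) ∈ p.edges) : s(x, y) ∈ s.edges := by
  subst hps
  rw [Walk.edges_append] at he
  rcases List.mem_append.1 he with he | he
  · exfalso
    have hxp : x ∈ pre.support := Walk.fst_mem_support_of_mem_edges _ he
    have hyp : y ∈ pre.support := Walk.snd_mem_support_of_mem_edges _ he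
    have hnodup := (Walk.isPath_def _).1 hp
    rw [Walk.support_append] at hnodup
    have hdisj := (List.nodup_append.1 hnodup).2.2
    have hxz : x = z := by
      rcases List.mem_cons.1 (by rw [Walk.support_eq_cons s] at hx; exact hx) with h | h
      · exact h
      · exact absurd rfl (hdisj x hxp x h)
    have hyz : y = z := by
      rcases List.mem_cons.1 (by rw [Walk.support_eq_cons s] at hy; exact hy) with h | h
      · exact h
      · exact absurd rfl (hdisj y hyp y h)
    exact hxy (hxz.trans hyz.symm)
  · exact he

lemma exists_last_neighbor {u : V} : ∀ (n : ℕ) {w v : V} (r : G.Walk w v), r.length ≤ n →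
    G.Adj u w →
    ∃ (z : V) (pre : G.Walk w z) (s : G.Walk z v), pre.append s = r ∧ G.Adj u z ∧
      ∀ t ∈ s.support, G.Adj u t → t = z := by
  classical
  intro n
  induction n with
  | zero =>
    intro w v r hlen hadj
    refine ⟨w, Walk.nil, r, by simp, hadj, ?_⟩
    intro t ht _
    have := support_of_length_zero r (Nat.le_zero.1 hlen)
    rw [this] at ht
    simpa using ht
  | succ n ih =>
    intro w v r hlen hadj
    by_cases hex : ∃ t, ∃ (_ : t ∈ r.support), t ≠ w ∧ G.Adj u t
    · obtain ⟨t, ht, htw, hut⟩ := hex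
      have hlt : (r.dropUntil t ht).length < r.length := by
        have hspec := Walk.take_spec r ht
        have hlen' : (r.takeUntil t ht).length + (r.dropUntil t ht).length = r.length := by
          rw [← Walk.length_append, hspec]
        have hpos : 0 < (r.takeUntil t ht).length := by
          rcases Nat.eq_zero_or_pos (r.takeUntil t ht).length with h0 | h
          · exfalso
            have := support_of_length_zero (r.takeUntil t ht) h0
            have : t ∈ [w] := by
              rw [← this]; exact Walk.end_mem_support _
            simp at this
            exact htw this
          · exact h
        omega
      obtain ⟨z, pre', s, heq, huz, hlast⟩ :=
        ih (r.dropUntil t ht) (by omega) hut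
      refine ⟨z, (r.takeUntil t ht).append pre', s, ?_, huz, hlast⟩
      rw [← Walk.append_assoc, heq, Walk.take_spec]
    · push_neg at hex
      refine ⟨w, Walk.nil, r, by simp, hadj, ?_⟩
      intro t ht hadjt
      by_contra hne
      exact (hex t ht hne) hadjt

lemma exists_chordfree_aux : ∀ (n : ℕ) {u v : V} (p : G.Walk u v), p.length ≤ n →
    ∃ q : G.Walk u v, q.IsPath ∧ (∀ z ∈ q.support, z ∈ p.support) ∧
      ∀ x ∈ q.support, ∀ y ∈ q.support, G.Adj x y → s(x, y) ∈ q.edges := by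
  classical
  intro n
  induction n with
  | zero =>
    intro u v p hlen
    cases p with
    | nil =>
      refine ⟨Walk.nil, by simp, by simp, ?_⟩
      intro x hx y hy hadj
      simp at hx hy
      subst hx; subst hy
      exact absurd hadj (G.loopless.irrefl _)
    | cons h q => simp at hlen
  | succ n ih =>
    intro u v p hlen
    cases p with
    | nil =>
      refine ⟨Walk.nil, by simp, by simp, ?_⟩
      intro x hx y hy hadj
      simp at hx hy
      subst hx; subst hy
      exact absurd hadj (G.loopless.irrefl _)
    | @cons _ w _ h p' =>
      obtain ⟨q', hq'path, hq'sub, hq'cf⟩ := ih p' (by simpa using Nat.succ_le_succ_iff.1 hlen)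
      by_cases hu : u ∈ q'.support
      · refine ⟨q'.dropUntil u hu, hq'path.dropUntil hu, ?_, ?_⟩
        · intro z hz
          have := Walk.support_dropUntil_subset q' hu hz
          simp [Walk.support_cons]
          exact Or.inr (hq'sub z this)
        · intro x hx y hy hadj
          have hx' := Walk.support_dropUntil_subset q' hu hx
          have hy' := Walk.support_dropUntil_subset q' hu hy
          have he := hq'cf x hx' y hy' hadj
          exact mem_edges_of_suffix (Walk.take_spec q' hu) hq'path hx hy hadj.ne he
      · obtain ⟨z, pre, s, heq, huz, hlast⟩ :=
          exists_last_neighbor q'.length q' le_rfl h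
        have hssub : ∀ t ∈ s.support, t ∈ q'.support := by
          intro t ht
          rw [← heq, Walk.support_append]
          rcases List.mem_cons.1 (by rw [Walk.support_eq_cons s] at ht; exact ht) with h1 | h1
          · subst h1
            exact List.mem_append.2 (Or.inl (Walk.end_mem_support pre))
          · exact List.mem_append.2 (Or.inr h1)
        have hspath : s.IsPath := by
          rw [← heq] at hq'path
          exact hq'path.of_append_right
        refine ⟨Walk.cons huz s, ?_, ?_, ?_⟩
        · rw [Walk.cons_isPath_iff]
          exact ⟨hspath, fun hus => hu (hssub u hus)⟩
        · intro t ht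
          rw [Walk.support_cons] at ht
          rcases List.mem_cons.1 ht with ht | ht
          · subst ht; simp [Walk.support_cons]
          · simp [Walk.support_cons]
            exact Or.inr (hq'sub t (hssub t ht))
        · intro x hx y hy hadj
          rw [Walk.support_cons] at hx hy
          rcases List.mem_cons.1 hx with hx' | hx' <;> rcases List.mem_cons.1 hy with hy' | hy' <;>
            clear hx hy
          · rw [hx', hy'] at hadj; exact absurd hadj (G.loopless.irrefl _)
          · have hyz := hlast y hy' (hx' ▸ hadj)
            rw [hx', hyz]
            simp [Walk.edges_cons]
          · have hxz := hlast x hx' (hy' ▸ hadj.symm)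
            rw [hy', hxz, Sym2.eq_swap]
            simp [Walk.edges_cons]
          · have he := hq'cf x (hssub x hx') y (hssub y hy') hadj
            rw [Walk.edges_cons]
            exact List.mem_cons_of_mem _
              (mem_edges_of_suffix heq hq'path hx' hy' hadj.ne he)

lemma exists_chordfree {u v : V} (h : G.Reachable u v) :
    ∃ q : G.Walk u v, q.IsPath ∧
      ∀ x ∈ q.support, ∀ y ∈ q.support, G.Adj x y → s(x, y) ∈ q.edges := by
  obtain ⟨p⟩ := h
  obtain ⟨q, h1, _, h3⟩ := exists_chordfree_aux p.length p le_rfl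
  exact ⟨q, h1, h3⟩


def Avoid (G : SimpleGraph V) (K : Set V) (u w : V) : Prop :=
  ∃ p : G.Walk u w, ∀ z ∈ p.support, z ∉ K

lemma Avoid.not_mem {K : Set V} {u w : V} (h : Avoid G K u w) : w ∉ K := by
  obtain ⟨p, hp⟩ := h
  exact hp w p.end_mem_support

lemma Avoid.start_not_mem {K : Set V} {u w : V} (h : Avoid G K u w) : u ∉ K := by
  obtain ⟨p, hp⟩ := h
  exact hp u p.start_mem_support

lemma Avoid.refl {K : Set V} {u : V} (hu : u ∉ K) : Avoid G K u u :=
  ⟨Walk.nil, by simpa using hu⟩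

lemma Avoid.symm {K : Set V} {u w : V} (h : Avoid G K u w) : Avoid G K w u := by
  obtain ⟨p, hp⟩ := h
  exact ⟨p.reverse, fun z hz => hp z (by rwa [Walk.support_reverse, List.mem_reverse] at hz)⟩

lemma Avoid.trans {K : Set V} {u w x : V} (h : Avoid G K u w) (h' : Avoid G K w x) :
    Avoid G K u x := by
  obtain ⟨p, hp⟩ := h
  obtain ⟨q, hq⟩ := h'
  refine ⟨p.append q, fun z hz => ?_⟩
  rw [Walk.support_append] at hz
  rcases List.mem_append.1 hz with hz | hz
  · exact hp z hz
  · exact hq z (List.mem_of_mem_tail hz)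

lemma Avoid.extend {K : Set V} {u w w' : V} (h : Avoid G K u w) (hadj : G.Adj w w')
    (hw' : w' ∉ K) : Avoid G K u w' := by
  refine h.trans ⟨Walk.cons hadj Walk.nil, ?_⟩
  intro z hz
  simp only [Walk.support_cons, Walk.support_nil] at hz
  rcases List.mem_cons.1 hz with rfl | hz
  · exact h.not_mem
  · simp at hz; subst hz; exact hw'

lemma Avoid.of_support {K : Set V} {u w : V} (p : G.Walk u w)
    (hp : ∀ z ∈ p.support, z ∉ K) {z : V} (hz : z ∈ p.support) : Avoid G K u z := by
  classical
  exact ⟨p.takeUntil z hz, fun t ht => hp t (Walk.support_takeUntil_subset p hz ht)⟩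

lemma Avoid.reachable {K : Set V} {u w : V} (h : Avoid G K u w)
    (hu : u ∈ (Kᶜ : Set V)) (hw : w ∈ (Kᶜ : Set V)) :
    (G.induce (Kᶜ : Set V)).Reachable ⟨u, hu⟩ ⟨w, hw⟩ := by
  obtain ⟨p, hp⟩ := h
  exact ⟨liftWalk p (fun z hz => hp z hz) hu hw⟩

lemma reachable_induce_walk {S : Set V} {x y : ↥S} (h : (G.induce S).Reachable x y) :
    ∃ p : G.Walk (x : V) (y : V), ∀ z ∈ p.support, z ∈ S := by
  obtain ⟨q⟩ := h
  refine ⟨q.map (Embedding.induce S).toHom, ?_⟩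
  intro z hz
  change z ∈ (q.map (Embedding.induce S).toHom).support at hz
  rw [Walk.support_map] at hz
  obtain ⟨z', _, rfl⟩ := List.mem_map.1 hz
  exact z'.2

lemma neighbor_of_through {K : Set V} {u v x : V} (W : G.Walk u v)
    (hsupp : ∀ z ∈ W.support, z ∉ K ∨ z = x) (hx : x ∈ W.support) (hxu : x ≠ u) :
    ∃ y, G.Adj x y ∧ Avoid G K u y := by
  classical
  have hcount : List.count x (W.takeUntil x hx).support = 1 :=
    Walk.count_support_takeUntil_eq_one W hx
  obtain ⟨y, hadj, q, hq⟩ := walk_cons_cases (W.takeUntil x hx).reverse hxu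
  have hsup : (W.takeUntil x hx).reverse.support = x :: q.support := by
    rw [hq, Walk.support_cons]
  have hxq : x ∉ q.support := by
    have h1 : List.count x (W.takeUntil x hx).reverse.support = 1 := by
      rw [Walk.support_reverse, List.count_reverse]; exact hcount
    rw [hsup] at h1
    simp only [List.count_cons_self] at h1
    exact List.count_eq_zero.1 (by omega)
  refine ⟨y, hadj, q.reverse, ?_⟩
  intro z hz
  rw [Walk.support_reverse, List.mem_reverse] at hz
  have hzW : z ∈ W.support := by
    apply Walk.support_takeUntil_subset W hx
    rw [← List.mem_reverse, ← Walk.support_reverse, hsup]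
    exact List.mem_cons_of_mem x hz
  rcases hsupp z hzW with h | h
  · exact h
  · exact absurd (h ▸ hz) hxq

def sideGraph (G : SimpleGraph V) (S : Set V) (a b : V) : SimpleGraph V where
  Adj x y := G.Adj x y ∧ ¬(x ∈ ({a, b} : Set V) ∧ y ∈ ({a, b} : Set V)) ∧
    x ∈ S ∪ {a, b} ∧ y ∈ S ∪ {a, b}
  symm := ⟨fun x y ⟨h1, h2, h3, h4⟩ => ⟨h1.symm, fun ⟨p, q⟩ => h2 ⟨q, p⟩, h4, h3⟩⟩
  loopless := ⟨fun x h => G.loopless.irrefl x h.1⟩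

lemma sideGraph_support {S : Set V} {a b : V} : ∀ {x y : V} (p : (sideGraph G S a b).Walk x y),
    ∀ z ∈ p.support, z = y ∨ z ∈ S ∪ {a, b}
  | _, _, Walk.nil => by simp
  | _, _, Walk.cons h q => by
    intro z hz
    rw [Walk.support_cons] at hz
    rcases List.mem_cons.1 hz with rfl | hz
    · exact Or.inr h.2.2.1
    · exact sideGraph_support q z hz

lemma sideGraph_length {S : Set V} {a b : V} (hne : a ≠ b) (p : (sideGraph G S a b).Walk a b) :
    2 ≤ p.length := by
  cases p with
  | nil => exact absurd rfl hne
  | cons h q =>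
    cases q with
    | nil => exact absurd ⟨by simp, by simp⟩ h.2.1
    | cons h' q' => simp only [Walk.length_cons]; omega

lemma exists_side_path {S : Set V} {a b : V} (hab : a ≠ b) (haS : a ∉ S) (hbS : b ∉ S)
    {ya yb : V} (hyaS : ya ∈ S) (hybS : yb ∈ S) (haya : G.Adj a ya) (hbyb : G.Adj b yb)
    (hconn : ∃ q : G.Walk ya yb, ∀ z ∈ q.support, z ∈ S) :
    ∃ P : G.Walk a b, P.IsPath ∧ (∀ z ∈ P.support, z ∈ S ∪ {a, b}) ∧ 2 ≤ P.length ∧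
      (∀ x ∈ P.support, ∀ y ∈ P.support, G.Adj x y → s(x, y) = s(a, b) ∨ s(x, y) ∈ P.edges) ∧
      s(a, b) ∉ P.edges := by
  obtain ⟨q, hq⟩ := hconn
  set H := sideGraph G S a b with hH
  have hmemS : ∀ z ∈ S, z ∈ S ∪ {a, b} := fun z hz => Or.inl hz
  have hnotab : ∀ z ∈ S, z ∉ ({a, b} : Set V) := by
    intro z hz hmem
    rcases hmem with rfl | rfl
    · exact haS hz
    · exact hbS hz
  have hq' : ∀ e ∈ q.edges, e ∈ H.edgeSet := by
    intro e he
    induction e with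
    | _ z w =>
      have hzw : G.Adj z w := q.edges_subset_edgeSet he
      have hz : z ∈ S := hq z (Walk.fst_mem_support_of_mem_edges q he)
      have hw : w ∈ S := hq w (Walk.snd_mem_support_of_mem_edges q he)
      exact ⟨hzw, fun ⟨h1, _⟩ => hnotab z hz h1, hmemS z hz, hmemS w hw⟩
  have hreach : H.Reachable a b := by
    have h1 : H.Adj a ya := ⟨haya, fun ⟨_, h2⟩ => hnotab ya hyaS h2,
      Or.inr (by simp), hmemS ya hyaS⟩
    have h2 : H.Adj yb b := ⟨hbyb.symm, fun ⟨h1', _⟩ => hnotab yb hybS h1',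
      hmemS yb hybS, Or.inr (by simp)⟩
    have h3 : H.Reachable ya yb := Walk.reachable (q.transfer H hq')
    exact (h1.reachable).trans (h3.trans h2.reachable)
  obtain ⟨Q, hQpath, hQcf⟩ := exists_chordfree hreach
  have hQG : ∀ e ∈ Q.edges, e ∈ G.edgeSet := by
    intro e he
    induction e with
    | _ z w => exact (Q.edges_subset_edgeSet he).1
  refine ⟨Q.transfer G hQG, ?_, ?_, ?_, ?_, ?_⟩
  · rw [Walk.isPath_def, Walk.support_transfer]
    exact (Walk.isPath_def Q).1 hQpath
  · intro z hz
    rw [Walk.support_transfer] at hz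
    rcases sideGraph_support Q z hz with rfl | h
    · exact Or.inr (by simp)
    · exact h
  · have : Q.length = (Q.transfer G hQG).length := by
      rw [← Walk.length_edges, ← Walk.length_edges, Walk.edges_transfer]
    rw [← this]
    exact sideGraph_length hab Q
  · intro x hx y hy hadj
    rw [Walk.support_transfer] at hx hy
    by_cases hxab : x ∈ ({a, b} : Set V) ∧ y ∈ ({a, b} : Set V)
    · left
      obtain ⟨h1, h2⟩ := hxab
      rcases h1 with rfl | rfl <;> rcases h2 with rfl | rfl
      · exact absurd hadj (G.loopless.irrefl _)
      · rfl
      · exact Sym2.eq_swap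
      · exact absurd hadj (G.loopless.irrefl _)
    · right
      have hxm : x ∈ S ∪ {a, b} := by
        rcases sideGraph_support Q x hx with rfl | h
        · exact Or.inr (by simp)
        · exact h
      have hym : y ∈ S ∪ {a, b} := by
        rcases sideGraph_support Q y hy with rfl | h
        · exact Or.inr (by simp)
        · exact h
      have : H.Adj x y := ⟨hadj, hxab, hxm, hym⟩
      rw [Walk.edges_transfer]
      exact hQcf x hx y hy this
  · intro hmem
    rw [Walk.edges_transfer] at hmem
    have := Q.edges_subset_edgeSet hmem
    exact this.2.1 ⟨by simp, by simp⟩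


lemma wheel_of_neighbor (hw : WheelFree G) {a b c : V} {P : G.Walk a b}
    (hPpath : P.IsPath) (hab : G.Adj a b) (hca : G.Adj c a)
    (hcb : G.Adj c b) (hcP : c ∉ P.support)
    (hchord : ∀ x ∈ P.support, ∀ y ∈ P.support, G.Adj x y →
      s(x, y) = s(a, b) ∨ s(x, y) ∈ P.edges)
    (habE : s(a, b) ∉ P.edges) {y : V} (hy : y ∈ P.support) (hya : y ≠ a) (hyb : y ≠ b)
    (hcy : G.Adj c y) : False := by
  classical
  set Y : Set V := {z | z ∈ P.support ∨ z = c} with hYdef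
  have hmem : ∀ z ∈ P.support, z ∈ Y := fun z hz => Or.inl hz
  have haY : a ∈ Y := hmem a P.start_mem_support
  have hbY : b ∈ Y := hmem b P.end_mem_support
  have hcY : c ∈ Y := Or.inr rfl
  have hyY : y ∈ Y := hmem y hy
  have hYfin : Y.Finite := by
    have : Y ⊆ insert c {z | z ∈ P.support} := by
      intro z hz
      rcases hz with hz | hz
      · exact Set.mem_insert_of_mem _ hz
      · exact hz ▸ Set.mem_insert _ _
    exact Set.Finite.subset ((P.support.finite_toSet).insert c) this
  haveI : Finite ↥Y := hYfin.to_subtype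
  set P' := liftWalk P hmem haY hbY with hP'def
  have hadj' : (G.induce Y).Adj ⟨b, hbY⟩ ⟨a, haY⟩ := by simpa using hab.symm
  apply hw Y
  refine ⟨⟨c, hcY⟩, ⟨b, hbY⟩, Walk.cons hadj' P', ?_, ?_, ?_, ?_, ?_⟩
  · rw [Walk.cons_isCycle_iff]
    refine ⟨liftWalk_isPath P hmem haY hbY hPpath, ?_⟩
    intro hmem'
    rw [mem_liftWalk_edges] at hmem'
    rw [Sym2.eq_swap] at hmem'
    exact habE hmem'
  · intro hc
    rw [Walk.support_cons] at hc
    rcases List.mem_cons.1 hc with h | h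
    · have : c = b := congrArg Subtype.val h
      exact hcP (this ▸ P.end_mem_support)
    · rw [mem_liftWalk_support] at h
      exact hcP h
  · intro x
    rcases x.2 with hx | hx
    · right
      rw [Walk.support_cons]
      refine List.mem_cons_of_mem _ ?_
      have : x = ⟨(x : V), hmem _ hx⟩ := Subtype.ext rfl
      rw [this]
      exact (mem_liftWalk_support P hmem haY hbY _).2 hx
    · left; exact Subtype.ext hx
  · have hsub : ({⟨a, haY⟩, ⟨b, hbY⟩, ⟨y, hyY⟩} : Set ↥Y) ⊆
        {x | x ∈ (Walk.cons hadj' P').support ∧ (G.induce Y).Adj ⟨c, hcY⟩ x} := by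
      intro x hx
      rcases hx with rfl | rfl | rfl
      · refine ⟨?_, by simpa using hca⟩
        rw [Walk.support_cons]
        exact List.mem_cons_of_mem _
          ((mem_liftWalk_support P hmem haY hbY _).2 P.start_mem_support)
      · exact ⟨by rw [Walk.support_cons]; exact List.mem_cons_self, by simpa using hcb⟩
      · refine ⟨?_, by simpa using hcy⟩
        rw [Walk.support_cons]
        exact List.mem_cons_of_mem _ ((mem_liftWalk_support P hmem haY hbY _).2 hy)
    have h3 : ({⟨a, haY⟩, ⟨b, hbY⟩, ⟨y, hyY⟩} : Set ↥Y).ncard = 3 := by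
      rw [Set.ncard_insert_of_notMem, Set.ncard_insert_of_notMem, Set.ncard_singleton]
      · simp only [Set.mem_singleton_iff]
        intro h
        exact hyb (congrArg Subtype.val h).symm
      · simp only [Set.mem_insert_iff, Set.mem_singleton_iff]
        rintro (h | h)
        · exact hab.ne (congrArg Subtype.val h)
        · exact hya (congrArg Subtype.val h).symm
    calc 3 = ({⟨a, haY⟩, ⟨b, hbY⟩, ⟨y, hyY⟩} : Set ↥Y).ncard := h3.symm
      _ ≤ _ := Set.ncard_le_ncard hsub (Set.toFinite _)
  · intro e he
    induction e with
    | _ x z =>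
      have hadjxz : G.Adj (x : V) (z : V) := he
      by_cases hxc : (x : V) = c
      · right
        refine ⟨z, ?_, ?_⟩
        · rcases z.2 with hz | hz
          · rw [Walk.support_cons]
            refine List.mem_cons_of_mem _ ?_
            have : z = ⟨(z : V), hmem _ hz⟩ := Subtype.ext rfl
            rw [this]
            exact (mem_liftWalk_support P hmem haY hbY _).2 hz
          · exact absurd hadjxz (by rw [hxc, hz]; exact G.loopless.irrefl c)
        · have : x = ⟨c, hcY⟩ := Subtype.ext hxc
          rw [this]
      · by_cases hzc : (z : V) = c
        · right
          refine ⟨x, ?_, ?_⟩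
          · rcases x.2 with hx | hx
            · rw [Walk.support_cons]
              refine List.mem_cons_of_mem _ ?_
              have : x = ⟨(x : V), hmem _ hx⟩ := Subtype.ext rfl
              rw [this]
              exact (mem_liftWalk_support P hmem haY hbY _).2 hx
            · exact absurd hx hxc
          · have : z = ⟨c, hcY⟩ := Subtype.ext hzc
            rw [this, Sym2.eq_swap]
        · left
          have hxP : (x : V) ∈ P.support := x.2.resolve_right hxc
          have hzP : (z : V) ∈ P.support := z.2.resolve_right hzc
          rcases hchord _ hxP _ hzP hadjxz with h | h
          · rw [Walk.edges_cons]
            refine List.mem_cons.2 (Or.inl ?_)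
            rcases Sym2.eq_iff.1 h with ⟨h1, h2⟩ | ⟨h1, h2⟩
            · rw [show x = ⟨a, haY⟩ from Subtype.ext h1,
                show z = ⟨b, hbY⟩ from Subtype.ext h2, Sym2.eq_swap]
            · rw [show x = ⟨b, hbY⟩ from Subtype.ext h1,
                show z = ⟨a, haY⟩ from Subtype.ext h2]
          · rw [Walk.edges_cons]
            refine List.mem_cons_of_mem _ ?_
            have hx' : x = ⟨(x : V), hmem _ hxP⟩ := Subtype.ext rfl
            have hz' : z = ⟨(z : V), hmem _ hzP⟩ := Subtype.ext rfl
            rw [hx', hz']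
            exact (mem_liftWalk_edges P hmem haY hbY _ _).2 h


lemma exists_minimal_cutset [Fintype V] {X : Set V} (hX : IsCutset G X) :
    ∃ K : Set V, K ⊆ X ∧ IsCutset G K ∧ ∀ x ∈ K, ¬ IsCutset G (K \ {x}) := by
  classical
  let P : Finset V → Prop := fun s => ↑s ⊆ X ∧ IsCutset G ↑s
  let S : Finset (Finset V) := Finset.univ.filter P
  have hne : S.Nonempty := by
    refine ⟨(Set.toFinite X).toFinset, ?_⟩
    simp only [S, Finset.mem_filter, Finset.mem_univ, true_and, P]
    rw [Set.Finite.coe_toFinset]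
    exact ⟨subset_rfl, hX⟩
  obtain ⟨s, hs, hmin⟩ := S.exists_min_image Finset.card hne
  simp only [S, Finset.mem_filter, Finset.mem_univ, true_and, P] at hs
  refine ⟨↑s, hs.1, hs.2, ?_⟩
  intro x hx hcut
  have hxs : x ∈ s := by exact_mod_cast hx
  have hmem : s.erase x ∈ S := by
    simp only [S, Finset.mem_filter, Finset.mem_univ, true_and, P]
    rw [Finset.coe_erase]
    exact ⟨(Set.diff_subset).trans hs.1, hcut⟩
  have := hmin _ hmem
  have hlt := Finset.card_erase_lt_of_mem hxs
  omega

lemma preconnected_induce_univ (hG : G.Preconnected) :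
    (G.induce (Set.univ : Set V)).Preconnected := by
  intro x y
  obtain ⟨p⟩ := hG (x : V) (y : V)
  have := liftWalk p (fun z _ => Set.mem_univ z) (Set.mem_univ _) (Set.mem_univ _)
  exact ⟨(by exact this : (G.induce (Set.univ : Set V)).Walk x y)⟩


theorem main {V : Type u} [Fintype V] (G : SimpleGraph V)
    (h2 : TwoConnected G) (hw : WheelFree G)
    (hth : ∀ X : Set V, ¬ IsThetaPlus (G.induce X))
    (hsmall : ∀ X : Set V, G.IsClique X → (X.ncard = 1 ∨ X.ncard = 2) →
      ¬ IsCutset G X) :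
    ∀ X : Set V, G.IsClique X → ¬ IsCutset G X := by
  classical
  intro X hclique hcut
  obtain ⟨K, hKX, hKcut, hKmin⟩ := exists_minimal_cutset hcut
  have hKclique : G.IsClique K := hclique.subset hKX
  have hKne : K ≠ ∅ := by
    rintro rfl
    apply hKcut
    rw [Set.compl_empty]
    exact preconnected_induce_univ h2.2.1.preconnected
  obtain ⟨u', v', huv⟩ : ∃ u v : ↥(Kᶜ : Set V), ¬ (G.induce (Kᶜ : Set V)).Reachable u v := by
    by_contra h
    push_neg at h
    exact hKcut fun u v => h u v
  set u : V := ↑u' with hu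
  set v : V := ↑v' with hv
  have huK : u ∉ K := u'.2
  have hvK : v ∉ K := v'.2
  have hnr : ∀ w, Avoid G K u w → Avoid G K v w → False := by
    intro w h1 h2'
    apply huv
    have r1 := h1.reachable u'.2 h1.not_mem
    have r2 := h2'.reachable v'.2 h2'.not_mem
    exact r1.trans r2.symm
  set A : Set V := {w | Avoid G K u w} with hAdef
  set B : Set V := {w | Avoid G K v w} with hBdef
  have hAK : ∀ w ∈ A, w ∉ K := fun w hw => hw.not_mem
  have hBK : ∀ w ∈ B, w ∉ K := fun w hw => hw.not_mem
  have hABdisj : ∀ w, w ∈ A → w ∈ B → False := fun w h1 h2' => hnr w h1 h2'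
  have hABedge : ∀ w ∈ A, ∀ w' ∈ B, ¬ G.Adj w w' := by
    intro w hw w' hw' hadj
    exact hnr w' (hw.extend hadj hw'.not_mem) hw'
  have hconnA : ∀ w ∈ A, ∀ w' ∈ A, ∃ q : G.Walk w w', ∀ z ∈ q.support, z ∈ A := by
    intro w hw w' hw'
    obtain ⟨p, hp⟩ := (Avoid.symm hw).trans hw'
    exact ⟨p, fun z hz => hw.trans (Avoid.of_support p hp hz)⟩
  have hconnB : ∀ w ∈ B, ∀ w' ∈ B, ∃ q : G.Walk w w', ∀ z ∈ q.support, z ∈ B := by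
    intro w hw w' hw'
    obtain ⟨p, hp⟩ := (Avoid.symm hw).trans hw'
    exact ⟨p, fun z hz => hw.trans (Avoid.of_support p hp hz)⟩
  have hnbr : ∀ x ∈ K, (∃ y, G.Adj x y ∧ y ∈ A) ∧ (∃ y, G.Adj x y ∧ y ∈ B) := by
    intro x hxK
    have hnc := hKmin x hxK
    rw [IsCutset, not_not] at hnc
    have huc : u ∈ ((K \ {x})ᶜ : Set V) := fun h => huK h.1
    have hvc : v ∈ ((K \ {x})ᶜ : Set V) := fun h => hvK h.1
    have hxu : x ≠ u := fun h => huK (h ▸ hxK)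
    have hxv : x ≠ v := fun h => hvK (h ▸ hxK)
    obtain ⟨W, hWsupp⟩ := reachable_induce_walk (hnc ⟨u, huc⟩ ⟨v, hvc⟩)
    have hsupp' : ∀ z ∈ W.support, z ∉ K ∨ z = x := by
      intro z hz
      have hz' := hWsupp z hz
      by_cases hzx : z = x
      · exact Or.inr hzx
      · exact Or.inl fun hzK => hz' ⟨hzK, hzx⟩
    have hxW : x ∈ W.support := by
      by_contra hxW
      refine hnr v ⟨W, ?_⟩ (Avoid.refl hvK)
      intro z hz
      rcases hsupp' z hz with h | h
      · exact h
      · exact absurd (h ▸ hz) hxW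
    constructor
    · obtain ⟨y, hy1, hy2⟩ := neighbor_of_through W hsupp' hxW hxu
      exact ⟨y, hy1, hy2⟩
    · have hxW' : x ∈ W.reverse.support := by
        rwa [Walk.support_reverse, List.mem_reverse]
      have hsupp'' : ∀ z ∈ W.reverse.support, z ∉ K ∨ z = x := by
        intro z hz
        exact hsupp' z (by rwa [Walk.support_reverse, List.mem_reverse] at hz)
      obtain ⟨y, hy1, hy2⟩ := neighbor_of_through W.reverse hsupp'' hxW' hxv
      exact ⟨y, hy1, hy2⟩
  have hKfin : K.Finite := Set.toFinite K
  have hK3 : 3 ≤ K.ncard := by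
    have h0 : K.ncard ≠ 0 := fun h => hKne ((Set.ncard_eq_zero hKfin).1 h)
    have h1 : K.ncard ≠ 1 := fun h => hsmall K hKclique (Or.inl h) hKcut
    have h2' : K.ncard ≠ 2 := fun h => hsmall K hKclique (Or.inr h) hKcut
    omega
  obtain ⟨a, haK⟩ : K.Nonempty := Set.nonempty_of_ncard_ne_zero (by omega)
  have hKa : 2 ≤ (K \ {a}).ncard := by
    rw [Set.ncard_diff_singleton_of_mem haK]; omega
  obtain ⟨b, hbK'⟩ : (K \ {a}).Nonempty := Set.nonempty_of_ncard_ne_zero (by omega)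
  have hKab : 1 ≤ ((K \ {a}) \ {b}).ncard := by
    rw [Set.ncard_diff_singleton_of_mem hbK']
    omega
  obtain ⟨c, hcK'⟩ : ((K \ {a}) \ {b}).Nonempty := Set.nonempty_of_ncard_ne_zero (by omega)
  have hbK : b ∈ K := hbK'.1
  have hbna : b ≠ a := hbK'.2
  have hcK : c ∈ K := hcK'.1.1
  have hcna : c ≠ a := hcK'.1.2
  have hcnb : c ≠ b := hcK'.2
  have hab : G.Adj a b := hKclique haK hbK (Ne.symm hbna)
  have hcaAdj : G.Adj c a := hKclique hcK haK hcna
  have hcbAdj : G.Adj c b := hKclique hcK hbK hcnb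
  have haA : a ∉ A := fun h => hAK a h haK
  have hbA : b ∉ A := fun h => hAK b h hbK
  have hcA : c ∉ A := fun h => hAK c h hcK
  have haB : a ∉ B := fun h => hBK a h haK
  have hbB : b ∉ B := fun h => hBK b h hbK
  have hcB : c ∉ B := fun h => hBK c h hcK
  obtain ⟨ya, hya1, hya2⟩ := (hnbr a haK).1
  obtain ⟨yb, hyb1, hyb2⟩ := (hnbr b hbK).1
  obtain ⟨za, hza1, hza2⟩ := (hnbr a haK).2
  obtain ⟨zb, hzb1, hzb2⟩ := (hnbr b hbK).2
  obtain ⟨PA, hPApath, hPAsupp, hPAlen, hPAchord, hPAab⟩ :=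
    exists_side_path hab.ne haA hbA hya2 hyb2 hya1 hyb1 (hconnA ya hya2 yb hyb2)
  obtain ⟨PB, hPBpath, hPBsupp, hPBlen, hPBchord, hPBab⟩ :=
    exists_side_path hab.ne haB hbB hza2 hzb2 hza1 hzb1 (hconnB za hza2 zb hzb2)
  have hmemAB : ∀ t, t ∈ ({a, b} : Set V) → t = a ∨ t = b := by
    intro t ht
    rcases ht with h | h
    · exact Or.inl h
    · exact Or.inr h
  have hcPA : c ∉ PA.support := by
    intro h
    rcases hPAsupp c h with h' | h'
    · exact hcA h'
    · rcases hmemAB c h' with h'' | h''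
      · exact hcna h''
      · exact hcnb h''
  have hcPB : c ∉ PB.support := by
    intro h
    rcases hPBsupp c h with h' | h'
    · exact hcB h'
    · rcases hmemAB c h' with h'' | h''
      · exact hcna h''
      · exact hcnb h''
  have hwA : ∀ t ∈ PA.support, t ∈ A → ¬ G.Adj c t := by
    intro t ht htA hadj
    exact wheel_of_neighbor hw hPApath hab hcaAdj hcbAdj hcPA hPAchord hPAab ht
      (fun h => haA (h ▸ htA)) (fun h => hbA (h ▸ htA)) hadj
  have hwB : ∀ t ∈ PB.support, t ∈ B → ¬ G.Adj c t := by
    intro t ht htB hadj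
    exact wheel_of_neighbor hw hPBpath hab hcaAdj hcbAdj hcPB hPBchord hPBab ht
      (fun h => haB (h ▸ htB)) (fun h => hbB (h ▸ htB)) hadj
  have hEA : ∀ t ∈ PA.support, ∀ r ∈ PA.support, r ∈ A → G.Adj t r → s(t, r) ∈ PA.edges := by
    intro t ht r hr hrA hadj
    rcases hPAchord t ht r hr hadj with h | h
    · exfalso
      rcases Sym2.eq_iff.1 h with ⟨h1, h2⟩ | ⟨h1, h2⟩
      · exact hbA (h2 ▸ hrA)
      · exact haA (h2 ▸ hrA)
    · exact h
  have hEB : ∀ t ∈ PB.support, ∀ r ∈ PB.support, r ∈ B → G.Adj t r → s(t, r) ∈ PB.edges := by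
    intro t ht r hr hrB hadj
    rcases hPBchord t ht r hr hadj with h | h
    · exfalso
      rcases Sym2.eq_iff.1 h with ⟨h1, h2⟩ | ⟨h1, h2⟩
      · exact hbB (h2 ▸ hrB)
      · exact haB (h2 ▸ hrB)
    · exact h
  set X' : Set V := {z | z ∈ PA.support ∨ z ∈ PB.support ∨ z = c} with hX'def
  have haX : a ∈ X' := Or.inl PA.start_mem_support
  have hbX : b ∈ X' := Or.inl PA.end_mem_support
  have hcX : c ∈ X' := Or.inr (Or.inr rfl)
  have hsubA : ∀ z ∈ PA.support, z ∈ X' := fun z hz => Or.inl hz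
  have hsubB : ∀ z ∈ PB.support, z ∈ X' := fun z hz => Or.inr (Or.inl hz)
  apply hth X'
  have hadj1 : (G.induce X').Adj ⟨a, haX⟩ ⟨c, hcX⟩ := by simpa using hcaAdj.symm
  have hadj2 : (G.induce X').Adj ⟨c, hcX⟩ ⟨b, hbX⟩ := by simpa using hcbAdj
  have hclassify : ∀ t : ↥X', (t : V) = c ∨ (t : V) = a ∨ (t : V) = b ∨
      ((t : V) ∈ A ∧ (t : V) ∈ PA.support) ∨ ((t : V) ∈ B ∧ (t : V) ∈ PB.support) := by
    intro t
    rcases t.2 with h | h | h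
    · rcases hPAsupp _ h with h' | h'
      · exact Or.inr (Or.inr (Or.inr (Or.inl ⟨h', h⟩)))
      · rcases hmemAB _ h' with h'' | h''
        · exact Or.inr (Or.inl h'')
        · exact Or.inr (Or.inr (Or.inl h''))
    · rcases hPBsupp _ h with h' | h'
      · exact Or.inr (Or.inr (Or.inr (Or.inr ⟨h', h⟩)))
      · rcases hmemAB _ h' with h'' | h''
        · exact Or.inr (Or.inl h'')
        · exact Or.inr (Or.inr (Or.inl h''))
    · exact Or.inl h
  refine ⟨⟨a, haX⟩, ⟨b, hbX⟩, Walk.cons hadj1 (Walk.cons hadj2 Walk.nil),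
    liftWalk PA hsubA haX hbX, liftWalk PB hsubB haX hbX,
    fun h => hab.ne (congrArg Subtype.val h), by simpa using hab,
    ?_, liftWalk_isPath PA hsubA haX hbX hPApath, liftWalk_isPath PB hsubB haX hbX hPBpath,
    by simp, by rw [liftWalk_length]; exact hPAlen, by rw [liftWalk_length]; exact hPBlen,
    ?_, ?_, ?_, ?_, ?_⟩
  · rw [Walk.cons_isPath_iff, Walk.cons_isPath_iff]
    refine ⟨⟨by simp, ?_⟩, ?_⟩
    · simp only [Walk.support_nil, List.mem_singleton]
      intro h
      exact hcnb (congrArg Subtype.val h)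
    · simp only [Walk.support_cons, Walk.support_nil, List.mem_cons, List.not_mem_nil, or_false]
      rintro (h | h)
      · exact hcna (congrArg Subtype.val h).symm
      · exact hab.ne (congrArg Subtype.val h)
  · -- P1 ∩ P2
    intro x h1 h2
    rw [mem_liftWalk_support] at h2
    simp only [Walk.support_cons, Walk.support_nil, List.mem_cons, List.not_mem_nil, or_false] at h1
    rcases h1 with rfl | rfl | rfl
    · exact Or.inl rfl
    · exact absurd h2 hcPA
    · exact Or.inr rfl
  · -- P1 ∩ P3
    intro x h1 h2
    rw [mem_liftWalk_support] at h2
    simp only [Walk.support_cons, Walk.support_nil, List.mem_cons, List.not_mem_nil, or_false] at h1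
    rcases h1 with rfl | rfl | rfl
    · exact Or.inl rfl
    · exact absurd h2 hcPB
    · exact Or.inr rfl
  · -- P2 ∩ P3
    intro x h1 h2
    rw [mem_liftWalk_support] at h1 h2
    rcases hPAsupp _ h1 with h | h
    · exfalso
      rcases hPBsupp _ h2 with h' | h'
      · exact hABdisj _ h h'
      · rcases hmemAB _ h' with h'' | h''
        · exact haA (h'' ▸ h)
        · exact hbA (h'' ▸ h)
    · rcases hmemAB _ h with h' | h'
      · exact Or.inl (Subtype.ext h')
      · exact Or.inr (Subtype.ext h')
  · -- coverage
    intro x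
    rcases x.2 with h | h | h
    · refine Or.inr (Or.inl ?_)
      have hx : x = ⟨(x : V), hsubA _ h⟩ := Subtype.ext rfl
      rw [hx]
      exact (mem_liftWalk_support PA hsubA haX hbX _).2 h
    · refine Or.inr (Or.inr ?_)
      have hx : x = ⟨(x : V), hsubB _ h⟩ := Subtype.ext rfl
      rw [hx]
      exact (mem_liftWalk_support PB hsubB haX hbX _).2 h
    · left
      have hx : x = ⟨c, hcX⟩ := Subtype.ext h
      rw [hx]
      simp [Walk.support_cons]
  · -- edges
    intro e he
    induction e with
    | _ x z =>
      have hadjxz : G.Adj (x : V) (z : V) := he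
      have heA : ∀ (x' z' : ↥X'), (x' : V) ∈ PA.support → (z' : V) ∈ PA.support →
          s((x' : V), (z' : V)) ∈ PA.edges →
          s(x', z') ∈ (liftWalk PA hsubA haX hbX).edges := by
        intro x' z' _ _ hmem
        exact (mem_liftWalk_edges PA hsubA haX hbX _ _).2 hmem
      have heB : ∀ (x' z' : ↥X'), (x' : V) ∈ PB.support → (z' : V) ∈ PB.support →
          s((x' : V), (z' : V)) ∈ PB.edges →
          s(x', z') ∈ (liftWalk PB hsubB haX hbX).edges := by
        intro x' z' _ _ hmem
        exact (mem_liftWalk_edges PB hsubB haX hbX _ _).2 hmem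
      have haPA : a ∈ PA.support := PA.start_mem_support
      have hbPA : b ∈ PA.support := PA.end_mem_support
      have haPB : a ∈ PB.support := PB.start_mem_support
      have hbPB : b ∈ PB.support := PB.end_mem_support
      rcases hclassify x with hx | hx | hx | hx | hx <;>
        rcases hclassify z with hz | hz | hz | hz | hz
      · rw [hx, hz] at hadjxz; exact absurd hadjxz (G.loopless.irrefl _)
      · refine Or.inr (Or.inl ?_)
        rw [show x = (⟨c, hcX⟩ : ↥X') from Subtype.ext hx,
          show z = (⟨a, haX⟩ : ↥X') from Subtype.ext hz, Sym2.eq_swap]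
        simp [Walk.edges_cons]
      · refine Or.inr (Or.inl ?_)
        rw [show x = (⟨c, hcX⟩ : ↥X') from Subtype.ext hx,
          show z = (⟨b, hbX⟩ : ↥X') from Subtype.ext hz]
        simp [Walk.edges_cons]
      · exact absurd (by rw [← hx]; exact hadjxz : G.Adj c ↑z) (hwA _ hz.2 hz.1)
      · exact absurd (by rw [← hx]; exact hadjxz : G.Adj c ↑z) (hwB _ hz.2 hz.1)
      · refine Or.inr (Or.inl ?_)
        rw [show x = (⟨a, haX⟩ : ↥X') from Subtype.ext hx,
          show z = (⟨c, hcX⟩ : ↥X') from Subtype.ext hz]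
        simp [Walk.edges_cons]
      · rw [hx, hz] at hadjxz; exact absurd hadjxz (G.loopless.irrefl _)
      · exact Or.inl (by rw [show x = (⟨a, haX⟩ : ↥X') from Subtype.ext hx,
          show z = (⟨b, hbX⟩ : ↥X') from Subtype.ext hz])
      · refine Or.inr (Or.inr (Or.inl ?_))
        refine heA x z (by rw [hx]; exact haPA) hz.2 ?_
        rw [hx]
        exact hEA _ haPA _ hz.2 hz.1 (by rw [← hx]; exact hadjxz)
      · refine Or.inr (Or.inr (Or.inr ?_))
        refine heB x z (by rw [hx]; exact haPB) hz.2 ?_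
        rw [hx]
        exact hEB _ haPB _ hz.2 hz.1 (by rw [← hx]; exact hadjxz)
      · refine Or.inr (Or.inl ?_)
        rw [show x = (⟨b, hbX⟩ : ↥X') from Subtype.ext hx,
          show z = (⟨c, hcX⟩ : ↥X') from Subtype.ext hz, Sym2.eq_swap]
        simp [Walk.edges_cons]
      · exact Or.inl (by rw [show x = (⟨b, hbX⟩ : ↥X') from Subtype.ext hx,
          show z = (⟨a, haX⟩ : ↥X') from Subtype.ext hz, Sym2.eq_swap])
      · rw [hx, hz] at hadjxz; exact absurd hadjxz (G.loopless.irrefl _)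
      · refine Or.inr (Or.inr (Or.inl ?_))
        refine heA x z (by rw [hx]; exact hbPA) hz.2 ?_
        rw [hx]
        exact hEA _ hbPA _ hz.2 hz.1 (by rw [← hx]; exact hadjxz)
      · refine Or.inr (Or.inr (Or.inr ?_))
        refine heB x z (by rw [hx]; exact hbPB) hz.2 ?_
        rw [hx]
        exact hEB _ hbPB _ hz.2 hz.1 (by rw [← hx]; exact hadjxz)
      · exact absurd (by rw [← hz]; exact hadjxz.symm : G.Adj c ↑x) (hwA _ hx.2 hx.1)
      · refine Or.inr (Or.inr (Or.inl ?_))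
        rw [Sym2.eq_swap]
        refine heA z x (by rw [hz]; exact haPA) hx.2 ?_
        rw [hz]
        exact hEA _ haPA _ hx.2 hx.1 (by rw [← hz]; exact hadjxz.symm)
      · refine Or.inr (Or.inr (Or.inl ?_))
        rw [Sym2.eq_swap]
        refine heA z x (by rw [hz]; exact hbPA) hx.2 ?_
        rw [hz]
        exact hEA _ hbPA _ hx.2 hx.1 (by rw [← hz]; exact hadjxz.symm)
      · refine Or.inr (Or.inr (Or.inl ?_))
        exact heA x z hx.2 hz.2 (hEA _ hx.2 _ hz.2 hz.1 hadjxz)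
      · exact absurd hadjxz (hABedge _ hx.1 _ hz.1)
      · exact absurd (by rw [← hz]; exact hadjxz.symm : G.Adj c ↑x) (hwB _ hx.2 hx.1)
      · refine Or.inr (Or.inr (Or.inr ?_))
        rw [Sym2.eq_swap]
        refine heB z x (by rw [hz]; exact haPB) hx.2 ?_
        rw [hz]
        exact hEB _ haPB _ hx.2 hx.1 (by rw [← hz]; exact hadjxz.symm)
      · refine Or.inr (Or.inr (Or.inr ?_))
        rw [Sym2.eq_swap]
        refine heB z x (by rw [hz]; exact hbPB) hx.2 ?_
        rw [hz]
        exact hEB _ hbPB _ hx.2 hx.1 (by rw [← hz]; exact hadjxz.symm)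
      · exact absurd hadjxz.symm (hABedge _ hz.1 _ hx.1)
      · refine Or.inr (Or.inr (Or.inr ?_))
        exact heB x z hx.2 hz.2 (hEB _ hx.2 _ hz.2 hz.1 hadjxz)

end NCC

/-- A 2-connected wheel-free graph with no induced theta or
theta⁺ and no clique cutset of size one or two has no clique cutset at all. -/
theorem no_clique_cutset {V : Type u} [Fintype V] (G : SimpleGraph V)
    (h2 : TwoConnected G) (hw : WheelFree G)
    (hth : ∀ X : Set V, ¬ IsTheta (G.induce X) ∧ ¬ IsThetaPlus (G.induce X))
    (hsmall : ∀ X : Set V, G.IsClique X → (X.ncard = 1 ∨ X.ncard = 2) →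
      ¬ IsCutset G X) :
    ∀ X : Set V, G.IsClique X → ¬ IsCutset G X :=
  NCC.main G h2 hw (fun Y => (hth Y).2) hsmall
end
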